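/- arXiv:1412.6662 — 9 statements merged into one kernel-verified Lean document; each statement's English description precedes it below -/
import Mathlib

section
/- In a positively presented atomic cancellative monoid, the product of two fundamental elements is a fundamental element, and the product of a fundamental element with a quasi-central element (in either order) is a fundamental element. Hence the set F(M) of fundamental elements is a subsemigroup satisfying QZ(M)·F(M) = F(M)·QZ(M) = F(M). -/
/-- An atom of a monoid: a non-identity element that is indecomposable. -/
def IsMonAtom {M : Type*} [Monoid M] (a : M) : Prop :=
  a ≠ 1 ∧ ∀ b c : M, a = b * c → b = 1 ∨ c = 1

/-- A monoid is atomic if it carries a norm `ν` with `ν α = 0 ↔ α = 1` and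
`ν (αβ) ≥ ν α + ν β`. -/
def IsAtomicMonoid (M : Type*) [Monoid M] : Prop :=
  ∃ ν : M → ℕ, (∀ a : M, ν a = 0 ↔ a = 1) ∧ ∀ a b : M, ν a + ν b ≤ ν (a * b)

/-- Cancellation condition: `a * x * b = a * y * b` implies `x = y`. -/
def IsCancellative (M : Type*) [Monoid M] : Prop :=
  ∀ a b x y : M, a * x * b = a * y * b → x = y

/-- The monoid is generated by its atoms. -/
def GeneratedByAtoms (M : Type*) [Monoid M] : Prop :=
  Submonoid.closure {a : M | IsMonAtom a} = ⊤

/-- Quasi-central element: `s·Δ = Δ·σ(s)` for a permutation `σ` of the atoms. -/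
def IsQuasiCentral {M : Type*} [Monoid M] (Δ : M) : Prop :=
  ∃ σ : {a : M // IsMonAtom a} ≃ {a : M // IsMonAtom a},
    ∀ s : {a : M // IsMonAtom a}, (s : M) * Δ = Δ * (σ s : M)

/-- Fundamental element: there is a permutation `σ` of the atoms such that for every
atom `s` one has `Δ = s·Δ_s = Δ_s·σ(s)` for some `Δ_s`. -/
def IsFundamental {M : Type*} [Monoid M] (Δ : M) : Prop :=
  ∃ σ : {a : M // IsMonAtom a} ≃ {a : M // IsMonAtom a},
    ∀ s : {a : M // IsMonAtom a}, ∃ d : M, Δ = (s : M) * d ∧ Δ = d * (σ s : M)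


open Pointwise in
/-- Products of fundamental elements are fundamental, products of a fundamental and a
quasi-central element (in either order) are fundamental, and as sets
QZ(M)·F(M) = F(M)·QZ(M) = F(M). -/
theorem stmt_2 {M : Type*} [Monoid M] (hcan : IsCancellative M) (hat : IsAtomicMonoid M)
    (hgen : GeneratedByAtoms M) :
    (∀ Δ₁ Δ₂ : M, IsFundamental Δ₁ → IsFundamental Δ₂ → IsFundamental (Δ₁ * Δ₂)) ∧
    (∀ Δ q : M, IsFundamental Δ → IsQuasiCentral q →
      IsFundamental (Δ * q) ∧ IsFundamental (q * Δ)) ∧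
    ({x : M | IsQuasiCentral x} * {x : M | IsFundamental x} = {x : M | IsFundamental x}) ∧
    ({x : M | IsFundamental x} * {x : M | IsQuasiCentral x} = {x : M | IsFundamental x}) := by
  have hone : IsQuasiCentral (1 : M) :=
    ⟨Equiv.refl _, fun s => by simp⟩
  have hFF : ∀ Δ₁ Δ₂ : M, IsFundamental Δ₁ → IsFundamental Δ₂ → IsFundamental (Δ₁ * Δ₂) := by
    rintro Δ₁ Δ₂ ⟨σ₁, h₁⟩ ⟨σ₂, h₂⟩
    refine ⟨σ₁.trans σ₂, fun s => ?_⟩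
    obtain ⟨d₁, hd₁l, hd₁r⟩ := h₁ s
    obtain ⟨d₂, hd₂l, hd₂r⟩ := h₂ (σ₁ s)
    refine ⟨d₁ * Δ₂, by rw [hd₁l, mul_assoc], ?_⟩
    have key : d₁ * Δ₂ = Δ₁ * d₂ := by rw [hd₂l, ← mul_assoc, ← hd₁r]
    rw [key, Equiv.trans_apply, mul_assoc, ← hd₂r]
  have hFQ : ∀ Δ q : M, IsFundamental Δ → IsQuasiCentral q →
      IsFundamental (Δ * q) ∧ IsFundamental (q * Δ) := by
    rintro Δ q ⟨σ₁, h₁⟩ ⟨σ₂, h₂⟩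
    constructor
    · refine ⟨σ₁.trans σ₂, fun s => ?_⟩
      obtain ⟨d, hdl, hdr⟩ := h₁ s
      refine ⟨d * q, by rw [hdl, mul_assoc], ?_⟩
      rw [Equiv.trans_apply, mul_assoc, ← h₂ (σ₁ s), ← mul_assoc, ← hdr]
    · refine ⟨σ₂.trans σ₁, fun s => ?_⟩
      obtain ⟨d, hdl, hdr⟩ := h₁ (σ₂ s)
      refine ⟨q * d, ?_, ?_⟩
      · rw [← mul_assoc, h₂ s, mul_assoc, ← hdl]
      · rw [Equiv.trans_apply, mul_assoc, ← hdr]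
  refine ⟨hFF, hFQ, ?_, ?_⟩
  · ext x
    simp only [Set.mem_mul, Set.mem_setOf_eq]
    constructor
    · rintro ⟨q, hq, Δ, hΔ, rfl⟩
      exact (hFQ Δ q hΔ hq).2
    · intro hx
      exact ⟨1, hone, x, hx, one_mul x⟩
  · ext x
    simp only [Set.mem_mul, Set.mem_setOf_eq]
    constructor
    · rintro ⟨Δ, hΔ, q, hq, rfl⟩
      exact (hFQ Δ q hΔ hq).1
    · intro hx
      exact ⟨x, hx, 1, hone, mul_one x⟩
end

section
/- Let M be a cancellative atomic monoid and Δ a nontrivial quasi-central element. Then the set of left divisors of Δ equals the set of right divisors of Δ. -/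
/-- For a nontrivial quasi-central element of a cancellative atomic monoid generated by
its atoms, the set of left divisors equals the set of right divisors. -/
theorem stmt_3 {M : Type*} [Monoid M] (hcan : IsCancellative M) (hat : IsAtomicMonoid M)
    (hgen : GeneratedByAtoms M) (Δ : M) (hne : Δ ≠ 1) (hqc : IsQuasiCentral Δ) :
    {u : M | ∃ w, Δ = u * w} = {u : M | ∃ w, Δ = w * u} := by

  obtain ⟨σ, hσ⟩ := hqc
  have lcan : ∀ a x y : M, a * x = a * y → x = y := fun a x y h =>
    hcan a 1 x y (by simpa using h)
  have rcan : ∀ b x y : M, x * b = y * b → x = y := fun b x y h =>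
    hcan 1 b x y (by simpa using h)
  have L1 : ∀ v : M, ∃ v', v * Δ = Δ * v' := by
    intro v
    have hv : v ∈ Submonoid.closure {a : M | IsMonAtom a} := by rw [hgen]; trivial
    induction hv using Submonoid.closure_induction with
    | mem a ha => exact ⟨σ ⟨a, ha⟩, hσ ⟨a, ha⟩⟩
    | one => exact ⟨1, by simp⟩
    | mul a b _ _ iha ihb =>
        obtain ⟨a', ha'⟩ := iha
        obtain ⟨b', hb'⟩ := ihb
        exact ⟨a' * b', by rw [mul_assoc, hb', ← mul_assoc, ha', mul_assoc]⟩
  have L2 : ∀ v : M, ∃ v', v' * Δ = Δ * v := by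
    intro v
    have hv : v ∈ Submonoid.closure {a : M | IsMonAtom a} := by rw [hgen]; trivial
    induction hv using Submonoid.closure_induction with
    | mem a ha =>
        refine ⟨σ.symm ⟨a, ha⟩, ?_⟩
        simpa using hσ (σ.symm ⟨a, ha⟩)
    | one => exact ⟨1, by simp⟩
    | mul a b _ _ iha ihb =>
        obtain ⟨a', ha'⟩ := iha
        obtain ⟨b', hb'⟩ := ihb
        exact ⟨a' * b', by rw [mul_assoc, hb', ← mul_assoc, ha', mul_assoc]⟩
  ext u
  simp only [Set.mem_setOf_eq]
  constructor
  · rintro ⟨w, hw⟩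
    obtain ⟨w', hw'⟩ := L2 w
    refine ⟨w', ?_⟩
    apply rcan w
    rw [mul_assoc, ← hw, hw']
  · rintro ⟨w, hw⟩
    obtain ⟨w', hw'⟩ := L1 w
    refine ⟨w', ?_⟩
    apply lcan w
    rw [← mul_assoc, ← hw, hw']
end

section
/- Let M be a cancellative atomic monoid generated by its atoms. An element Δ ∈ M is a fundamental element if and only if Δ is a Garside element. -/
/-- The set of left divisors of an element. -/
def leftDivisors {M : Type*} [Monoid M] (Δ : M) : Set M := {u : M | ∃ w, Δ = u * w}

/-- The set of right divisors of an element. -/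
def rightDivisors {M : Type*} [Monoid M] (Δ : M) : Set M := {u : M | ∃ w, Δ = w * u}

/-- Garside element: the sets of left and right divisors coincide, generate the monoid,
and are finite in number. -/
def IsGarsideElement {M : Type*} [Monoid M] (Δ : M) : Prop :=
  leftDivisors Δ = rightDivisors Δ ∧ Submonoid.closure (leftDivisors Δ) = ⊤ ∧
    (leftDivisors Δ).Finite

/-! Both conditions amount to `MΔ = ΔM`. For a fundamental element this holds on the atoms
(`sΔ = Δσ(s)`), hence everywhere since the atoms generate. For a Garside element, a divisor
`x` has complements with `Δ = x·x' = x'·x''`, so `xΔ = Δx''`, and the divisors generate.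
Conversely, by cancellation `MΔ = ΔM` makes `xΔ = Δφ(x)` define an automorphism `φ` of `M`,
which permutes the atoms and yields `σ`; it also forces left and right divisors of `Δ` to
coincide.
Finiteness: a divisor of `Δ` is a product of at most `ν Δ` of the finitely many atoms. -/

section

variable {M : Type*} [Monoid M]

theorem IsCancellative.isCancelMul (h : IsCancellative M) : IsCancelMul M where
  mul_left_cancel a x y e := h a 1 x y (by simpa using e)
  mul_right_cancel b x y e := h 1 b x y (by simpa using e)

theorem IsMonAtom.map {N : Type*} [Monoid N] {a : M} (ha : IsMonAtom a) (e : M ≃* N) :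
    IsMonAtom (e a) := by
  refine ⟨(map_ne_one_iff e e.injective).2 ha.1, fun b c hbc => ?_⟩
  have : a = e.symm b * e.symm c := by rw [← map_mul, ← hbc, e.symm_apply_apply]
  simpa using ha.2 _ _ this

theorem MulEquiv.isMonAtom_apply_iff {N : Type*} [Monoid N] (e : M ≃* N) {a : M} :
    IsMonAtom (e a) ↔ IsMonAtom a :=
  ⟨fun h => by simpa using h.map e.symm, fun h => h.map e⟩

def MulEquiv.permAtoms (e : M ≃* M) : {a : M // IsMonAtom a} ≃ {a : M // IsMonAtom a} :=
  e.toEquiv.subtypeEquiv fun _ => e.isMonAtom_apply_iff.symm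

theorem IsMonAtom.mem_of_mem_closure {S : Set M} {a : M} (ha : IsMonAtom a)
    (h : a ∈ Submonoid.closure S) : a ∈ S := by
  revert ha
  induction h using Submonoid.closure_induction with
  | mem x hx => exact fun _ => hx
  | one => exact fun h1 => absurd rfl h1.1
  | mul x y _ _ ihx ihy =>
    intro hxy
    rcases hxy.2 x y rfl with rfl | rfl
    · rw [one_mul] at hxy ⊢; exact ihy hxy
    · rw [mul_one] at hxy ⊢; exact ihx hxy

section Norm

variable {ν : M → ℕ}

theorem List.length_le_norm_prod (hν₀ : ∀ a, ν a = 0 → a = 1)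
    (hν : ∀ a b, ν a + ν b ≤ ν (a * b)) {l : List M} (hl : ∀ a ∈ l, a ≠ 1) :
    l.length ≤ ν l.prod := by
  induction l with
  | nil => simp
  | cons a t ih =>
    have ha : 1 ≤ ν a := Nat.one_le_iff_ne_zero.2 fun h => hl a (by simp) (hν₀ a h)
    have ht := ih fun b hb => hl b (by simp [hb])
    rw [List.length_cons, List.prod_cons]
    exact (Nat.add_comm _ _ ▸ Nat.add_le_add ha ht).trans (hν _ _)

theorem finite_setOf_norm_le (hν₀ : ∀ a, ν a = 0 → a = 1)
    (hν : ∀ a b, ν a + ν b ≤ ν (a * b)) (hgen : GeneratedByAtoms M)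
    (hfin : {a : M | IsMonAtom a}.Finite) (n : ℕ) : {u : M | ν u ≤ n}.Finite := by
  have : Finite {a : M // IsMonAtom a} := hfin.to_subtype
  refine ((List.finite_length_le {a : M // IsMonAtom a} n).image
    fun l => (l.map Subtype.val).prod).subset fun u hu => ?_
  obtain ⟨l, hl, rfl⟩ :=
    Submonoid.exists_list_of_mem_closure (hgen ▸ Submonoid.mem_top u : u ∈ Submonoid.closure _)
  lift l to List {a : M // IsMonAtom a} using hl
  refine ⟨l, ?_, rfl⟩
  calc l.length = (l.map Subtype.val).length := (List.length_map _).symm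
    _ ≤ ν (l.map Subtype.val).prod := List.length_le_norm_prod hν₀ hν fun a ha => by
      obtain ⟨b, -, rfl⟩ := List.mem_map.1 ha
      exact b.2.1
    _ ≤ n := hu

end Norm

theorem IsAtomicMonoid.finite_leftDivisors (hat : IsAtomicMonoid M) (hgen : GeneratedByAtoms M)
    (hfin : {a : M | IsMonAtom a}.Finite) (Δ : M) : (leftDivisors Δ).Finite := by
  obtain ⟨ν, hν₀, hν⟩ := hat
  refine (finite_setOf_norm_le (fun a => (hν₀ a).1) hν hgen hfin (ν Δ)).subset ?_
  rintro u ⟨w, rfl⟩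
  exact (Nat.le_add_right _ _).trans (hν u w)

section Normal

variable {Δ : M}

theorem forall_exists_mul_eq_mul_of_closure_eq_top {S : Set M} (hS : Submonoid.closure S = ⊤)
    (h : ∀ s ∈ S, ∃ t, s * Δ = Δ * t) (x : M) : ∃ y, x * Δ = Δ * y := by
  induction (hS ▸ Submonoid.mem_top x : x ∈ Submonoid.closure S)
    using Submonoid.closure_induction with
  | mem s hs => exact h s hs
  | one => exact ⟨1, by simp⟩
  | mul a b _ _ iha ihb =>
    obtain ⟨a', ha'⟩ := iha
    obtain ⟨b', hb'⟩ := ihb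
    exact ⟨a' * b', by rw [mul_assoc, hb', ← mul_assoc, ha', mul_assoc]⟩

theorem forall_exists_mul_eq_mul_of_closure_eq_top' {S : Set M} (hS : Submonoid.closure S = ⊤)
    (h : ∀ t ∈ S, ∃ s, s * Δ = Δ * t) (y : M) : ∃ x, x * Δ = Δ * y := by
  induction (hS ▸ Submonoid.mem_top y : y ∈ Submonoid.closure S)
    using Submonoid.closure_induction with
  | mem t ht => exact h t ht
  | one => exact ⟨1, by simp⟩
  | mul a b _ _ iha ihb =>
    obtain ⟨a', ha'⟩ := iha
    obtain ⟨b', hb'⟩ := ihb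
    exact ⟨a' * b', by rw [mul_assoc, hb', ← mul_assoc, ha', mul_assoc]⟩

theorem leftDivisors_subset_rightDivisors [IsRightCancelMul M]
    (h : ∀ y, ∃ x, x * Δ = Δ * y) : leftDivisors Δ ⊆ rightDivisors Δ := by
  rintro u ⟨w, hw⟩
  obtain ⟨z, hz⟩ := h w
  refine ⟨z, mul_right_cancel (b := w) ?_⟩
  rw [mul_assoc, ← hw, hz]

theorem rightDivisors_subset_leftDivisors [IsLeftCancelMul M]
    (h : ∀ x, ∃ y, x * Δ = Δ * y) : rightDivisors Δ ⊆ leftDivisors Δ := by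
  rintro u ⟨w, hw⟩
  obtain ⟨z, hz⟩ := h w
  refine ⟨z, mul_left_cancel (a := w) ?_⟩
  rw [← mul_assoc, ← hw, hz]

theorem exists_mulEquiv_mul_eq_mul [IsCancelMul M] (h₁ : ∀ x, ∃ y, x * Δ = Δ * y)
    (h₂ : ∀ y, ∃ x, x * Δ = Δ * y) : ∃ φ : M ≃* M, ∀ x, x * Δ = Δ * φ x := by
  choose φ hφ using h₁
  have map_one : φ 1 = 1 := mul_left_cancel (a := Δ) (by rw [← hφ, one_mul, mul_one])
  have map_mul (x y : M) : φ (x * y) = φ x * φ y :=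
    mul_left_cancel (a := Δ) (by rw [← hφ, mul_assoc, hφ, ← mul_assoc, hφ, mul_assoc])
  have injective : Function.Injective φ := fun x y hxy =>
    mul_right_cancel (b := Δ) (by rw [hφ, hφ, hxy])
  have surjective : Function.Surjective φ := fun y => by
    obtain ⟨x, hx⟩ := h₂ y
    exact ⟨x, mul_left_cancel (a := Δ) (by rw [← hφ, hx])⟩
  exact ⟨MulEquiv.ofBijective (MonoidHom.mk ⟨φ, map_one⟩ map_mul) ⟨injective, surjective⟩, hφ⟩

theorem IsFundamental.isQuasiCentral (hΔ : IsFundamental Δ) : IsQuasiCentral Δ := by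
  obtain ⟨σ, hσ⟩ := hΔ
  refine ⟨σ, fun s => ?_⟩
  obtain ⟨d, hsd, hdσ⟩ := hσ s
  nth_rw 1 [hdσ]
  rw [← mul_assoc, ← hsd]

theorem IsFundamental.atoms_subset_leftDivisors (hΔ : IsFundamental Δ) :
    {a : M | IsMonAtom a} ⊆ leftDivisors Δ := fun s hs =>
  let ⟨_, hσ⟩ := hΔ
  let ⟨d, hsd, _⟩ := hσ ⟨s, hs⟩
  ⟨d, hsd⟩

theorem IsQuasiCentral.forall_exists_mul_eq_mul (hΔ : IsQuasiCentral Δ)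
    (hgen : GeneratedByAtoms M) : ∀ x, ∃ y, x * Δ = Δ * y :=
  let ⟨σ, hσ⟩ := hΔ
  forall_exists_mul_eq_mul_of_closure_eq_top hgen fun s hs => ⟨σ ⟨s, hs⟩, hσ ⟨s, hs⟩⟩

theorem IsQuasiCentral.forall_exists_mul_eq_mul' (hΔ : IsQuasiCentral Δ)
    (hgen : GeneratedByAtoms M) : ∀ y, ∃ x, x * Δ = Δ * y := by
  obtain ⟨σ, hσ⟩ := hΔ
  refine forall_exists_mul_eq_mul_of_closure_eq_top' hgen fun t ht => ⟨σ.symm ⟨t, ht⟩, ?_⟩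
  simpa using hσ (σ.symm ⟨t, ht⟩)

theorem exists_mul_eq_mul_of_mem_leftDivisors (hLR : leftDivisors Δ = rightDivisors Δ) {x : M}
    (hx : x ∈ leftDivisors Δ) : ∃ y, x * Δ = Δ * y := by
  obtain ⟨w, hw⟩ := hx
  obtain ⟨y, hy⟩ : w ∈ leftDivisors Δ := hLR ▸ ⟨x, hw⟩
  refine ⟨y, ?_⟩
  nth_rw 1 [hy]
  rw [← mul_assoc, ← hw]

theorem exists_mul_eq_mul_of_mem_rightDivisors (hLR : leftDivisors Δ = rightDivisors Δ) {y : M}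
    (hy : y ∈ rightDivisors Δ) : ∃ x, x * Δ = Δ * y := by
  obtain ⟨w, hw⟩ := hy
  obtain ⟨x, hx⟩ : w ∈ rightDivisors Δ := hLR ▸ ⟨y, hw⟩
  refine ⟨x, ?_⟩
  nth_rw 2 [hx]
  rw [mul_assoc, ← hw]

theorem isFundamental_of_mulEquiv [IsLeftCancelMul M] (φ : M ≃* M)
    (hφ : ∀ x, x * Δ = Δ * φ x) (hatoms : {a : M | IsMonAtom a} ⊆ leftDivisors Δ) :
    IsFundamental Δ := by
  refine ⟨φ.permAtoms, fun s => ?_⟩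
  obtain ⟨d, hd⟩ := hatoms s.2
  refine ⟨d, hd, mul_left_cancel (a := (s : M)) ?_⟩
  rw [← mul_assoc, ← hd]
  exact hφ s

end Normal

end

/-- An element of a cancellative atomic monoid generated by its (finitely many) atoms is
fundamental if and only if it is a Garside element. -/
theorem stmt_4 {M : Type*} [Monoid M] (hcan : IsCancellative M) (hat : IsAtomicMonoid M)
    (hgen : GeneratedByAtoms M) (hfin : {a : M | IsMonAtom a}.Finite) (Δ : M) :
    IsFundamental Δ ↔ IsGarsideElement Δ := by
  have := hcan.isCancelMul
  constructor
  · intro hΔ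
    have h₁ := hΔ.isQuasiCentral.forall_exists_mul_eq_mul hgen
    have h₂ := hΔ.isQuasiCentral.forall_exists_mul_eq_mul' hgen
    refine ⟨(leftDivisors_subset_rightDivisors h₂).antisymm
      (rightDivisors_subset_leftDivisors h₁), ?_, hat.finite_leftDivisors hgen hfin Δ⟩
    exact top_le_iff.1 (hgen ▸ Submonoid.closure_mono hΔ.atoms_subset_leftDivisors)
  · rintro ⟨hLR, hgenL, -⟩
    have hgenR : Submonoid.closure (rightDivisors Δ) = ⊤ := hLR ▸ hgenL
    obtain ⟨φ, hφ⟩ := exists_mulEquiv_mul_eq_mul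
      (forall_exists_mul_eq_mul_of_closure_eq_top hgenL
        fun _ => exists_mul_eq_mul_of_mem_leftDivisors hLR)
      (forall_exists_mul_eq_mul_of_closure_eq_top' hgenR
        fun _ => exists_mul_eq_mul_of_mem_rightDivisors hLR)
    exact isFundamental_of_mulEquiv φ hφ fun a ha => ha.mem_of_mem_closure (hgenL ▸ trivial)
end

section
/- Let M be a cancellative atomic monoid, and let Δ₁, Δ₂ be quasi-central elements such that Δ₁·d = Δ₂ for some d ∈ M. Then d is quasi-central. -/
/-- If Δ₁ and Δ₂ are quasi-central and Δ₁·d = Δ₂, then d is quasi-central. -/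
theorem stmt_5 {M : Type*} [Monoid M] (hcan : IsCancellative M) (hat : IsAtomicMonoid M)
    (hgen : GeneratedByAtoms M) (Δ₁ Δ₂ d : M)
    (h₁ : IsQuasiCentral Δ₁) (h₂ : IsQuasiCentral Δ₂) (hd : Δ₁ * d = Δ₂) :
    IsQuasiCentral d := by
  obtain ⟨σ₁, hσ₁⟩ := h₁
  obtain ⟨σ₂, hσ₂⟩ := h₂
  refine ⟨σ₁.symm.trans σ₂, fun t => ?_⟩
  have key : Δ₁ * ((t : M) * d) * 1 = Δ₁ * (d * (σ₂ (σ₁.symm t) : M)) * 1 := by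
    have h1 : (σ₁.symm t : M) * Δ₁ = Δ₁ * (t : M) := by
      have := hσ₁ (σ₁.symm t); rwa [Equiv.apply_symm_apply] at this
    have h2 := hσ₂ (σ₁.symm t)
    calc Δ₁ * ((t : M) * d) * 1 = (σ₁.symm t : M) * Δ₁ * d := by
          rw [mul_one, ← mul_assoc, ← h1]
      _ = (σ₁.symm t : M) * Δ₂ := by rw [mul_assoc, hd]
      _ = Δ₂ * (σ₂ (σ₁.symm t) : M) := h2
      _ = Δ₁ * (d * (σ₂ (σ₁.symm t) : M)) * 1 := by rw [← hd, mul_one, mul_assoc]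
  exact hcan Δ₁ 1 _ _ key
end

section
/- Let M be a cancellative atomic monoid carrying a fundamental element, and suppose any two atoms of M admit a right least common multiple and a left least common multiple. Then any two elements of M admit a right least common multiple and a left least common multiple (i.e., M satisfies the LCM conditions). -/
/-- `m` is a right least common multiple of `u` and `v`. -/
def IsRightLcm {M : Type*} [Monoid M] (u v m : M) : Prop :=
  (∃ w, m = u * w) ∧ (∃ w, m = v * w) ∧
    ∀ m' : M, (∃ w, m' = u * w) → (∃ w, m' = v * w) → ∃ w, m' = m * w

/-- `m` is a left least common multiple of `u` and `v`. -/
def IsLeftLcm {M : Type*} [Monoid M] (u v m : M) : Prop :=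
  (∃ w, m = w * u) ∧ (∃ w, m = w * v) ∧
    ∀ m' : M, (∃ w, m' = w * u) → (∃ w, m' = w * v) → ∃ w, m' = w * m

/-- `d` is a left greatest common divisor of `u` and `v`. -/
def IsLeftGcd {M : Type*} [Monoid M] (u v d : M) : Prop :=
  (∃ w, u = d * w) ∧ (∃ w, v = d * w) ∧
    ∀ d' : M, (∃ w, u = d' * w) → (∃ w, v = d' * w) → ∃ w, d = d' * w

/-- `d` is a right greatest common divisor of `u` and `v`. -/
def IsRightGcd {M : Type*} [Monoid M] (u v d : M) : Prop :=
  (∃ w, u = w * d) ∧ (∃ w, v = w * d) ∧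
    ∀ d' : M, (∃ w, u = w * d') → (∃ w, v = w * d') → ∃ w, d = w * d'


section Aux
variable {M : Type*} [Monoid M]

lemma lcancel (hcan : IsCancellative M) {a x y : M} (h : a * x = a * y) : x = y :=
  hcan a 1 x y (by simpa using h)

lemma exists_atom_head' (hgen : GeneratedByAtoms M) (x : M) :
    x = 1 ∨ ∃ s u : M, IsMonAtom s ∧ x = s * u := by
  have hmem : x ∈ Submonoid.closure {a : M | IsMonAtom a} := by
    rw [hgen]; exact Submonoid.mem_top x
  induction hmem using Submonoid.closure_induction with
  | mem a ha => exact Or.inr ⟨a, 1, ha, (mul_one a).symm⟩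
  | one => exact Or.inl rfl
  | mul a b ha hb iha ihb =>
    rcases iha with rfl | ⟨s, u, hs, rfl⟩
    · simpa using ihb
    · exact Or.inr ⟨s, u * b, hs, mul_assoc s u b⟩

lemma exists_atom_head (hgen : GeneratedByAtoms M) {x : M} (hx : x ≠ 1) :
    ∃ s u : M, IsMonAtom s ∧ x = s * u :=
  (exists_atom_head' hgen x).resolve_left hx
end Aux

section Core
variable {M : Type*} [Monoid M]

/-- Core: if `u, v` have a common right multiple `z`, they admit a right lcm.
Strong induction on `ν z`. -/
lemma rlcm_of_common (hcan : IsCancellative M) (hgen : GeneratedByAtoms M)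
    (ν : M → ℕ) (hν0 : ∀ a : M, ν a = 0 ↔ a = 1) (hνadd : ∀ a b : M, ν a + ν b ≤ ν (a * b))
    (hatoms : ∀ a b : M, IsMonAtom a → IsMonAtom b → ∃ m, IsRightLcm a b m) :
    ∀ n : ℕ, ∀ z u v x y : M, ν z ≤ n → z = u * x → z = v * y →
      ∃ m, IsRightLcm u v m := by
  have hone : ∀ a : M, a ≠ 1 → 1 ≤ ν a := by
    intro a ha
    rcases Nat.eq_zero_or_pos (ν a) with h | h
    · exact absurd ((hν0 a).1 h) ha
    · exact h
  intro n
  induction n using Nat.strong_induction_on with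
  | _ n ih =>
    intro z u v x y hz hzu hzv
    by_cases hu : u = 1
    · subst hu
      exact ⟨v, ⟨v, (one_mul v).symm⟩, ⟨1, (mul_one v).symm⟩, fun m' _ h2 => h2⟩
    by_cases hv : v = 1
    · subst hv
      exact ⟨u, ⟨1, (mul_one u).symm⟩, ⟨u, (one_mul u).symm⟩, fun m' h1 _ => h1⟩
    obtain ⟨s, u', hs, hu'⟩ := exists_atom_head hgen hu
    obtain ⟨t, v', ht, hv'⟩ := exists_atom_head hgen hv
    obtain ⟨L, ⟨p, hLp⟩, ⟨q, hLq⟩, hLu⟩ := hatoms s t hs ht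
    have hzs : z = s * (u' * x) := by rw [hzu, hu', mul_assoc]
    have hzt : z = t * (v' * y) := by rw [hzv, hv', mul_assoc]
    obtain ⟨r, hzr⟩ := hLu z ⟨u' * x, hzs⟩ ⟨v' * y, hzt⟩
    -- cancel s : u' * x = p * r
    have h1 : u' * x = p * r := by
      apply lcancel hcan (a := s)
      rw [← hzs, hzr, hLp, mul_assoc]
    have h2 : v' * y = q * r := by
      apply lcancel hcan (a := t)
      rw [← hzt, hzr, hLq, mul_assoc]
    -- norm bounds
    have hns : 1 ≤ ν s := hone s hs.1
    have hnt : 1 ≤ ν t := hone t ht.1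
    have hb1 : ν (u' * x) < n := by
      have := hνadd s (u' * x)
      rw [← hzs] at this
      omega
    have hb2 : ν (v' * y) < n := by
      have := hνadd t (v' * y)
      rw [← hzt] at this
      omega
    obtain ⟨m₁, ⟨a₁, hm₁u⟩, ⟨b₁, hm₁p⟩, hm₁univ⟩ :=
      ih (ν (u' * x)) hb1 (u' * x) u' p x r le_rfl rfl h1
    obtain ⟨m₂, ⟨a₂, hm₂v⟩, ⟨b₂, hm₂q⟩, hm₂univ⟩ :=
      ih (ν (v' * y)) hb2 (v' * y) v' q y r le_rfl rfl h2
    -- r is a common right multiple of b₁ and b₂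
    obtain ⟨e, he⟩ := hm₁univ (u' * x) ⟨x, rfl⟩ ⟨r, h1⟩
    have hre : r = b₁ * e := by
      apply lcancel hcan (a := p)
      rw [← h1, he, hm₁p, mul_assoc]
    obtain ⟨f, hf⟩ := hm₂univ (v' * y) ⟨y, rfl⟩ ⟨r, h2⟩
    have hrf : r = b₂ * f := by
      apply lcancel hcan (a := q)
      rw [← h2, hf, hm₂q, mul_assoc]
    have hbr : ν r < n := by
      have hL1 : 1 ≤ ν L := by
        have := hνadd s p
        rw [← hLp] at this
        omega
      have := hνadd L r
      rw [← hzr] at this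
      omega
    obtain ⟨m₃, ⟨c, hc⟩, ⟨d, hd⟩, hm₃univ⟩ :=
      ih (ν r) hbr r b₁ b₂ e f le_rfl hre hrf
    have key1 : p * b₁ = u' * a₁ := hm₁p.symm.trans hm₁u
    have key2 : q * b₂ = v' * a₂ := hm₂q.symm.trans hm₂v
    refine ⟨L * m₃, ⟨a₁ * c, ?_⟩, ⟨a₂ * d, ?_⟩, ?_⟩
    · rw [hu', hLp, hc, mul_assoc, mul_assoc, ← mul_assoc p, key1, mul_assoc]
    · rw [hv', hLq, hd, mul_assoc, mul_assoc, ← mul_assoc q, key2, mul_assoc]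
    · rintro z'' ⟨x'', hx''⟩ ⟨y'', hy''⟩
      have hzs'' : z'' = s * (u' * x'') := by rw [hx'', hu', mul_assoc]
      have hzt'' : z'' = t * (v' * y'') := by rw [hy'', hv', mul_assoc]
      obtain ⟨r'', hr''⟩ := hLu z'' ⟨u' * x'', hzs''⟩ ⟨v' * y'', hzt''⟩
      have h1'' : u' * x'' = p * r'' := by
        apply lcancel hcan (a := s)
        rw [← hzs'', hr'', hLp, mul_assoc]
      have h2'' : v' * y'' = q * r'' := by
        apply lcancel hcan (a := t)
        rw [← hzt'', hr'', hLq, mul_assoc]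
      obtain ⟨e'', he''⟩ := hm₁univ (u' * x'') ⟨x'', rfl⟩ ⟨r'', h1''⟩
      have hre'' : r'' = b₁ * e'' := by
        apply lcancel hcan (a := p)
        rw [← h1'', he'', hm₁p, mul_assoc]
      obtain ⟨f'', hf''⟩ := hm₂univ (v' * y'') ⟨y'', rfl⟩ ⟨r'', h2''⟩
      have hrf'' : r'' = b₂ * f'' := by
        apply lcancel hcan (a := q)
        rw [← h2'', hf'', hm₂q, mul_assoc]
      obtain ⟨g, hg⟩ := hm₃univ r'' ⟨e'', hre''⟩ ⟨f'', hrf''⟩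
      exact ⟨g, by rw [hr'', hg, mul_assoc]⟩
end Core

section Delta
variable {M : Type*} [Monoid M]

lemma comm_delta (hgen : GeneratedByAtoms M) {Δ : M} (hΔ : IsFundamental Δ) :
    ∀ x : M, ∃ x', x * Δ = Δ * x' := by
  obtain ⟨σ, hσ⟩ := hΔ
  intro x
  have hmem : x ∈ Submonoid.closure {a : M | IsMonAtom a} := by
    rw [hgen]; exact Submonoid.mem_top x
  induction hmem using Submonoid.closure_induction with
  | mem a ha =>
    obtain ⟨d, h1, h2⟩ := hσ ⟨a, ha⟩
    exact ⟨(σ ⟨a, ha⟩ : M), by rw [h2] at h1 ⊢; rw [← mul_assoc, ← h1]⟩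
  | one => exact ⟨1, by rw [one_mul, mul_one]⟩
  | mul a b _ _ iha ihb =>
    obtain ⟨a', ha'⟩ := iha
    obtain ⟨b', hb'⟩ := ihb
    exact ⟨a' * b', by rw [mul_assoc, hb', ← mul_assoc, ha', mul_assoc]⟩

lemma comm_delta_pow (hgen : GeneratedByAtoms M) {Δ : M} (hΔ : IsFundamental Δ) :
    ∀ (k : ℕ) (x : M), ∃ x', x * Δ ^ k = Δ ^ k * x' := by
  intro k
  induction k with
  | zero => exact fun x => ⟨x, by simp⟩
  | succ k ihk =>
    intro x
    obtain ⟨x₁, hx₁⟩ := ihk x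
    obtain ⟨x₂, hx₂⟩ := comm_delta hgen hΔ x₁
    exact ⟨x₂, by rw [pow_succ, ← mul_assoc, hx₁, mul_assoc, hx₂, ← mul_assoc]⟩

lemma dvd_delta_pow (hgen : GeneratedByAtoms M) {Δ : M} (hΔ : IsFundamental Δ) :
    ∀ x : M, ∃ (k : ℕ) (w : M), Δ ^ k = x * w := by
  obtain ⟨σ, hσ⟩ := hΔ
  intro x
  have hmem : x ∈ Submonoid.closure {a : M | IsMonAtom a} := by
    rw [hgen]; exact Submonoid.mem_top x
  induction hmem using Submonoid.closure_induction with
  | mem a ha =>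
    obtain ⟨d, h1, _⟩ := hσ ⟨a, ha⟩
    exact ⟨1, d, by rw [pow_one]; exact h1⟩
  | one => exact ⟨0, 1, by simp⟩
  | mul a b _ _ iha ihb =>
    obtain ⟨ka, wa, hwa⟩ := iha
    obtain ⟨kb, wb, hwb⟩ := ihb
    obtain ⟨wa', hwa'⟩ := comm_delta_pow hgen ⟨σ, hσ⟩ kb wa
    refine ⟨ka + kb, wb * wa', ?_⟩
    rw [pow_add, hwa, mul_assoc, hwa', hwb]; simp [mul_assoc]

/-- all right lcms exist -/
lemma rlcm_all (hcan : IsCancellative M) (hat : IsAtomicMonoid M)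
    (hgen : GeneratedByAtoms M) (hfund : ∃ Δ : M, IsFundamental Δ)
    (hatoms : ∀ a b : M, IsMonAtom a → IsMonAtom b → ∃ m, IsRightLcm a b m) :
    ∀ u v : M, ∃ m, IsRightLcm u v m := by
  obtain ⟨ν, hν0, hνadd⟩ := hat
  obtain ⟨Δ, hΔ⟩ := hfund
  intro u v
  obtain ⟨ku, wu, hwu⟩ := dvd_delta_pow hgen hΔ u
  obtain ⟨kv, wv, hwv⟩ := dvd_delta_pow hgen hΔ v
  have h1 : Δ ^ (ku + kv) = u * (wu * Δ ^ kv) := by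
    rw [pow_add, hwu, mul_assoc]
  have h2 : Δ ^ (ku + kv) = v * (wv * Δ ^ ku) := by
    rw [add_comm, pow_add, hwv, mul_assoc]
  exact rlcm_of_common hcan hgen ν hν0 hνadd hatoms (ν (Δ ^ (ku + kv)))
    (Δ ^ (ku + kv)) u v _ _ le_rfl h1 h2
end Delta

section Op
open MulOpposite
variable {M : Type*} [Monoid M]

lemma atom_op {a : M} (h : IsMonAtom a) : IsMonAtom (op a) := by
  refine ⟨fun he => h.1 (by simpa using congrArg unop he), fun b c hbc => ?_⟩
  have : a = unop c * unop b := by simpa using congrArg unop hbc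
  rcases h.2 (unop c) (unop b) this with hc | hb
  · exact Or.inr (by rw [← op_unop c, hc, op_one])
  · exact Or.inl (by rw [← op_unop b, hb, op_one])

lemma atom_unop {a : Mᵐᵒᵖ} (h : IsMonAtom a) : IsMonAtom (unop a) := by
  refine ⟨fun he => h.1 (by rw [← op_unop a, he, op_one]), fun b c hbc => ?_⟩
  have : a = op c * op b := by rw [← op_unop a, hbc]; rfl
  rcases h.2 (op c) (op b) this with hc | hb
  · exact Or.inr (by simpa using congrArg unop hc)
  · exact Or.inl (by simpa using congrArg unop hb)

def atomEquivOp : {a : M // IsMonAtom a} ≃ {a : Mᵐᵒᵖ // IsMonAtom a} where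
  toFun s := ⟨op s.1, atom_op s.2⟩
  invFun s := ⟨unop s.1, atom_unop s.2⟩
  left_inv s := rfl
  right_inv s := rfl

lemma fund_op {Δ : M} (h : IsFundamental Δ) : IsFundamental (op Δ) := by
  obtain ⟨σ, hσ⟩ := h
  refine ⟨(atomEquivOp.symm.trans σ.symm).trans atomEquivOp, fun S => ?_⟩
  obtain ⟨d, h1, h2⟩ := hσ (σ.symm (atomEquivOp.symm S))
  rw [Equiv.apply_symm_apply] at h2
  refine ⟨op d, ?_, ?_⟩
  · show op Δ = S.1 * op d
    have : (atomEquivOp.symm S : M) = unop S.1 := rfl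
    rw [this] at h2
    rw [h2]
    show op (d * unop S.1) = S.1 * op d
    rw [op_mul, op_unop]
  · show op Δ = op d * op ((σ.symm (atomEquivOp.symm S) : M))
    rw [h1, op_mul]

lemma gen_op (hgen : GeneratedByAtoms M) : GeneratedByAtoms Mᵐᵒᵖ := by
  rw [GeneratedByAtoms, eq_top_iff]
  intro x _
  have key : ∀ y : M, y ∈ Submonoid.closure {a : M | IsMonAtom a} →
      op y ∈ Submonoid.closure {a : Mᵐᵒᵖ | IsMonAtom a} := by
    intro y hy
    induction hy using Submonoid.closure_induction with
    | mem a ha => exact Submonoid.subset_closure (atom_op ha)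
    | one => exact (by rw [op_one]; exact one_mem _)
    | mul a b _ _ iha ihb => exact (by rw [op_mul]; exact mul_mem ihb iha)
  have hmem : unop x ∈ Submonoid.closure {a : M | IsMonAtom a} := by
    rw [hgen]; exact Submonoid.mem_top _
  simpa using key (unop x) hmem

lemma can_op (hcan : IsCancellative M) : IsCancellative Mᵐᵒᵖ := by
  intro a b x y h
  have h' := congrArg unop h
  simp only [unop_mul] at h'
  have : unop b * unop x * unop a = unop b * unop y * unop a := by
    rw [mul_assoc, mul_assoc]; exact h'
  have := hcan (unop b) (unop a) (unop x) (unop y) this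
  exact unop_injective this

lemma atomic_op (hat : IsAtomicMonoid M) : IsAtomicMonoid Mᵐᵒᵖ := by
  obtain ⟨ν, hν0, hνadd⟩ := hat
  refine ⟨fun a => ν (unop a), fun a => ?_, fun a b => ?_⟩
  · rw [hν0]
    exact ⟨fun h => by rw [← op_unop a, h, op_one], fun h => by rw [h]; rfl⟩
  · show ν (unop a) + ν (unop b) ≤ ν (unop (a * b))
    rw [unop_mul]
    calc ν (unop a) + ν (unop b) = ν (unop b) + ν (unop a) := add_comm _ _
      _ ≤ ν (unop b * unop a) := hνadd _ _

lemma rlcm_op_of_llcm {u v m : M} (h : IsLeftLcm u v m) :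
    IsRightLcm (op u) (op v) (op m) := by
  obtain ⟨⟨w1, hw1⟩, ⟨w2, hw2⟩, huniv⟩ := h
  refine ⟨⟨op w1, by rw [hw1, op_mul]⟩, ⟨op w2, by rw [hw2, op_mul]⟩, ?_⟩
  rintro m' ⟨a, ha⟩ ⟨b, hb⟩
  obtain ⟨w, hw⟩ := huniv (unop m')
    ⟨unop a, by simpa using congrArg unop ha⟩
    ⟨unop b, by simpa using congrArg unop hb⟩
  exact ⟨op w, by rw [← op_unop m', hw, op_mul]⟩

lemma llcm_of_rlcm_op {u v : M} {m : Mᵐᵒᵖ} (h : IsRightLcm (op u) (op v) m) :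
    IsLeftLcm u v (unop m) := by
  obtain ⟨⟨w1, hw1⟩, ⟨w2, hw2⟩, huniv⟩ := h
  refine ⟨⟨unop w1, by simpa using congrArg unop hw1⟩,
    ⟨unop w2, by simpa using congrArg unop hw2⟩, ?_⟩
  rintro m' ⟨a, ha⟩ ⟨b, hb⟩
  obtain ⟨w, hw⟩ := huniv (op m') ⟨op a, by rw [ha, op_mul]⟩ ⟨op b, by rw [hb, op_mul]⟩
  exact ⟨unop w, by simpa using congrArg unop hw⟩
end Op

/-- If a cancellative atomic monoid (generated by its atoms) carries a fundamental
element and any two atoms admit right and left least common multiples, then any two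
elements admit right and left least common multiples. -/
theorem stmt_6 {M : Type*} [Monoid M] (hcan : IsCancellative M) (hat : IsAtomicMonoid M)
    (hgen : GeneratedByAtoms M) (hfund : ∃ Δ : M, IsFundamental Δ)
    (hatoms : ∀ a b : M, IsMonAtom a → IsMonAtom b →
      (∃ m, IsRightLcm a b m) ∧ (∃ m, IsLeftLcm a b m)) :
    ∀ u v : M, (∃ m, IsRightLcm u v m) ∧ (∃ m, IsLeftLcm u v m) := by
  intro u v
  constructor
  · exact rlcm_all hcan hat hgen hfund (fun a b ha hb => (hatoms a b ha hb).1) u v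
  · have hcan' := can_op hcan
    have hat' := atomic_op hat
    have hgen' := gen_op hgen
    have hfund' : ∃ Δ : Mᵐᵒᵖ, IsFundamental Δ := by
      obtain ⟨Δ, hΔ⟩ := hfund
      exact ⟨MulOpposite.op Δ, fund_op hΔ⟩
    have hatoms' : ∀ a b : Mᵐᵒᵖ, IsMonAtom a → IsMonAtom b → ∃ m, IsRightLcm a b m := by
      intro a b ha hb
      obtain ⟨m, hm⟩ := (hatoms (MulOpposite.unop a) (MulOpposite.unop b)
        (atom_unop ha) (atom_unop hb)).2
      exact ⟨MulOpposite.op m, rlcm_op_of_llcm hm⟩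
    obtain ⟨m, hm⟩ := rlcm_all hcan' hat' hgen' hfund' hatoms'
      (MulOpposite.op u) (MulOpposite.op v)
    exact ⟨MulOpposite.unop m, llcm_of_rlcm_op hm⟩
end

section
/- Let M be an atomic monoid carrying a fundamental element Δ. Then M satisfies the left LCM condition if and only if M satisfies the right GCD condition (and symmetrically, the right LCM condition holds iff the left GCD condition holds). -/
section Aux
variable {M : Type*} [Monoid M]

lemma atom_induction (ν : M → ℕ) (hν0 : ∀ a : M, ν a = 0 ↔ a = 1)
    (hνm : ∀ a b : M, ν a + ν b ≤ ν (a * b))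
    (P : M → Prop) (h1 : P 1) (hat : ∀ a, IsMonAtom a → P a)
    (hmul : ∀ a b, P a → P b → P (a * b)) : ∀ a, P a := by
  have key : ∀ n, ∀ a : M, ν a ≤ n → P a := by
    intro n
    induction n with
    | zero =>
      intro a ha
      have : a = 1 := (hν0 a).1 (Nat.le_zero.1 ha)
      exact this ▸ h1
    | succ n ih =>
      intro a ha
      by_cases ha1 : a = 1
      · exact ha1 ▸ h1
      by_cases hatom : IsMonAtom a
      · exact hat a hatom
      · have h2 : ¬ ∀ b c : M, a = b * c → b = 1 ∨ c = 1 := fun h => hatom ⟨ha1, h⟩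
        push_neg at h2
        obtain ⟨b, c, habc, hb1, hc1⟩ := h2
        have hbn : ν b ≠ 0 := fun h => hb1 ((hν0 b).1 h)
        have hcn : ν c ≠ 0 := fun h => hc1 ((hν0 c).1 h)
        have hle : ν b + ν c ≤ ν a := habc ▸ hνm b c
        exact habc ▸ hmul b c (ih b (by omega)) (ih c (by omega))
  exact fun a => key (ν a) a le_rfl

/-- Left LCM condition implies right GCD condition (pure atomicity). -/
lemma lcm_to_gcd_left (ν : M → ℕ) (hν0 : ∀ a : M, ν a = 0 ↔ a = 1)
    (hνm : ∀ a b : M, ν a + ν b ≤ ν (a * b))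
    (h : ∀ u v : M, ∃ d, IsLeftLcm u v d) :
    ∀ u v : M, ∃ d, IsRightGcd u v d := by
  classical
  intro u v
  set Q : ℕ → Prop := fun n => ∃ d : M, ((∃ w, u = w * d) ∧ (∃ w, v = w * d)) ∧ ν d = n with hQ
  have hbound : ∀ d : M, (∃ w, u = w * d) → ν d ≤ ν u := by
    rintro d ⟨w, rfl⟩
    exact le_trans (Nat.le_add_left _ _) (hνm w d)
  have hQ0 : Q 0 := ⟨1, ⟨⟨u, (mul_one u).symm⟩, ⟨v, (mul_one v).symm⟩⟩, (hν0 1).2 rfl⟩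
  have hg : Q (Nat.findGreatest Q (ν u)) := Nat.findGreatest_spec (Nat.zero_le _) hQ0
  obtain ⟨d, ⟨hdu, hdv⟩, hdn⟩ := hg
  refine ⟨d, hdu, hdv, ?_⟩
  rintro d' hd'u hd'v
  obtain ⟨m, ⟨c, hc⟩, ⟨c', hc'⟩, hmin⟩ := h d d'
  obtain ⟨w, hw⟩ := hdu
  obtain ⟨w', hw'⟩ := hd'u
  obtain ⟨y, hy⟩ := hmin u ⟨w, hw⟩ ⟨w', hw'⟩
  obtain ⟨p, hp⟩ := hdv
  obtain ⟨p', hp'⟩ := hd'v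
  obtain ⟨z, hz⟩ := hmin v ⟨p, hp⟩ ⟨p', hp'⟩
  -- m is a common right divisor of u and v
  have hmQ : Q (ν m) := ⟨m, ⟨⟨y, hy⟩, ⟨z, hz⟩⟩, rfl⟩
  have hle : ν m ≤ Nat.findGreatest Q (ν u) :=
    Nat.le_findGreatest (hbound m ⟨y, hy⟩) hmQ
  have h1 : ν c + ν d ≤ ν m := hc ▸ hνm c d
  have hc0 : ν c = 0 := by omega
  have hc1 : c = 1 := (hν0 c).1 hc0
  have hmd : m = d := by rw [hc, hc1, one_mul]
  exact ⟨c', by rw [← hmd, hc']⟩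

/-- Right LCM condition implies left GCD condition (mirror). -/
lemma lcm_to_gcd_right (ν : M → ℕ) (hν0 : ∀ a : M, ν a = 0 ↔ a = 1)
    (hνm : ∀ a b : M, ν a + ν b ≤ ν (a * b))
    (h : ∀ u v : M, ∃ d, IsRightLcm u v d) :
    ∀ u v : M, ∃ d, IsLeftGcd u v d := by
  classical
  intro u v
  set Q : ℕ → Prop := fun n => ∃ d : M, ((∃ w, u = d * w) ∧ (∃ w, v = d * w)) ∧ ν d = n with hQ
  have hbound : ∀ d : M, (∃ w, u = d * w) → ν d ≤ ν u := by
    rintro d ⟨w, rfl⟩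
    exact le_trans (Nat.le_add_right _ _) (hνm d w)
  have hQ0 : Q 0 := ⟨1, ⟨⟨u, (one_mul u).symm⟩, ⟨v, (one_mul v).symm⟩⟩, (hν0 1).2 rfl⟩
  have hg : Q (Nat.findGreatest Q (ν u)) := Nat.findGreatest_spec (Nat.zero_le _) hQ0
  obtain ⟨d, ⟨hdu, hdv⟩, hdn⟩ := hg
  refine ⟨d, hdu, hdv, ?_⟩
  rintro d' hd'u hd'v
  obtain ⟨m, ⟨c, hc⟩, ⟨c', hc'⟩, hmin⟩ := h d d'
  obtain ⟨w, hw⟩ := hdu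
  obtain ⟨w', hw'⟩ := hd'u
  obtain ⟨y, hy⟩ := hmin u ⟨w, hw⟩ ⟨w', hw'⟩
  obtain ⟨p, hp⟩ := hdv
  obtain ⟨p', hp'⟩ := hd'v
  obtain ⟨z, hz⟩ := hmin v ⟨p, hp⟩ ⟨p', hp'⟩
  have hmQ : Q (ν m) := ⟨m, ⟨⟨y, hy⟩, ⟨z, hz⟩⟩, rfl⟩
  have hle : ν m ≤ Nat.findGreatest Q (ν u) :=
    Nat.le_findGreatest (hbound m ⟨y, hy⟩) hmQ
  have h1 : ν d + ν c ≤ ν m := hc ▸ hνm d c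
  have hc0 : ν c = 0 := by omega
  have hc1 : c = 1 := (hν0 c).1 hc0
  have hmd : m = d := by rw [hc, hc1, mul_one]
  exact ⟨c', by rw [← hmd, hc']⟩

/-- Right GCD + existence of common left multiples gives left LCMs. -/
lemma gcd_to_lcm_left (ν : M → ℕ) (hν0 : ∀ a : M, ν a = 0 ↔ a = 1)
    (hνm : ∀ a b : M, ν a + ν b ≤ ν (a * b))
    (hclm : ∀ u v : M, ∃ m a b : M, m = a * u ∧ m = b * v)
    (h : ∀ u v : M, ∃ d, IsRightGcd u v d) :
    ∀ u v : M, ∃ d, IsLeftLcm u v d := by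
  classical
  intro u v
  have hex : ∃ n : ℕ, ∃ m : M, ((∃ w, m = w * u) ∧ (∃ w, m = w * v)) ∧ ν m = n := by
    obtain ⟨m, a, b, ha, hb⟩ := hclm u v
    exact ⟨ν m, m, ⟨⟨a, ha⟩, ⟨b, hb⟩⟩, rfl⟩
  obtain ⟨m, ⟨hmu, hmv⟩, hmn⟩ := Nat.find_spec hex
  refine ⟨m, hmu, hmv, ?_⟩
  rintro m' hm'u hm'v
  obtain ⟨g, ⟨x, hx⟩, ⟨y, hy⟩, hmax⟩ := h m m'
  obtain ⟨a, ha⟩ := hmu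
  obtain ⟨a', ha'⟩ := hm'u
  obtain ⟨p, hp⟩ := hmax u ⟨a, ha⟩ ⟨a', ha'⟩
  obtain ⟨b, hb⟩ := hmv
  obtain ⟨b', hb'⟩ := hm'v
  obtain ⟨q, hq⟩ := hmax v ⟨b, hb⟩ ⟨b', hb'⟩
  -- g is a common left multiple of u and v
  have hgS : Nat.find hex ≤ ν g := Nat.find_min' hex ⟨g, ⟨⟨p, hp⟩, ⟨q, hq⟩⟩, rfl⟩
  have h1 : ν x + ν g ≤ ν m := hx ▸ hνm x g
  have hx0 : ν x = 0 := by omega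
  have hx1 : x = 1 := (hν0 x).1 hx0
  have hmg : m = g := by rw [hx, hx1, one_mul]
  exact ⟨y, by rw [hy, hmg]⟩

/-- Left GCD + existence of common right multiples gives right LCMs. -/
lemma gcd_to_lcm_right (ν : M → ℕ) (hν0 : ∀ a : M, ν a = 0 ↔ a = 1)
    (hνm : ∀ a b : M, ν a + ν b ≤ ν (a * b))
    (hcrm : ∀ u v : M, ∃ m a b : M, m = u * a ∧ m = v * b)
    (h : ∀ u v : M, ∃ d, IsLeftGcd u v d) :
    ∀ u v : M, ∃ d, IsRightLcm u v d := by
  classical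
  intro u v
  have hex : ∃ n : ℕ, ∃ m : M, ((∃ w, m = u * w) ∧ (∃ w, m = v * w)) ∧ ν m = n := by
    obtain ⟨m, a, b, ha, hb⟩ := hcrm u v
    exact ⟨ν m, m, ⟨⟨a, ha⟩, ⟨b, hb⟩⟩, rfl⟩
  obtain ⟨m, ⟨hmu, hmv⟩, hmn⟩ := Nat.find_spec hex
  refine ⟨m, hmu, hmv, ?_⟩
  rintro m' hm'u hm'v
  obtain ⟨g, ⟨x, hx⟩, ⟨y, hy⟩, hmax⟩ := h m m'
  obtain ⟨a, ha⟩ := hmu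
  obtain ⟨a', ha'⟩ := hm'u
  obtain ⟨p, hp⟩ := hmax u ⟨a, ha⟩ ⟨a', ha'⟩
  obtain ⟨b, hb⟩ := hmv
  obtain ⟨b', hb'⟩ := hm'v
  obtain ⟨q, hq⟩ := hmax v ⟨b, hb⟩ ⟨b', hb'⟩
  have hgS : Nat.find hex ≤ ν g := Nat.find_min' hex ⟨g, ⟨⟨p, hp⟩, ⟨q, hq⟩⟩, rfl⟩
  have h1 : ν g + ν x ≤ ν m := hx ▸ hνm g x
  have hx0 : ν x = 0 := by omega
  have hx1 : x = 1 := (hν0 x).1 hx0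
  have hmg : m = g := by rw [hx, hx1, mul_one]
  exact ⟨y, by rw [hy, hmg]⟩

end Aux

/-- In an atomic monoid carrying a fundamental element, the left LCM condition holds
iff the right GCD condition holds, and the right LCM condition holds iff the left GCD
condition holds. -/
theorem stmt_7 {M : Type*} [Monoid M] (hat : IsAtomicMonoid M)
    (Δ : M) (hΔ : IsFundamental Δ) :
    ((∀ u v : M, ∃ d, IsLeftLcm u v d) ↔ (∀ u v : M, ∃ d, IsRightGcd u v d)) ∧
    ((∀ u v : M, ∃ d, IsRightLcm u v d) ↔ (∀ u v : M, ∃ d, IsLeftGcd u v d)) := by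
  obtain ⟨ν, hν0, hνm⟩ := hat
  obtain ⟨σ, hσ⟩ := hΔ
  -- quasi-commutation with Δ
  have hQ : ∀ γ : M, ∃ γ' : M, γ * Δ = Δ * γ' := by
    refine atom_induction ν hν0 hνm _ ⟨1, by rw [one_mul, mul_one]⟩ ?_ ?_
    · intro a ha
      obtain ⟨d, hd1, hd2⟩ := hσ ⟨a, ha⟩
      have hd1' : Δ = a * d := hd1
      refine ⟨(σ ⟨a, ha⟩ : M), ?_⟩
      conv_lhs => rw [hd2]
      rw [← mul_assoc, ← hd1']
    · rintro a b ⟨a', ha'⟩ ⟨b', hb'⟩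
      exact ⟨a' * b', by rw [mul_assoc, hb', ← mul_assoc, ha', mul_assoc]⟩
  have hR : ∀ γ : M, ∃ γ' : M, Δ * γ = γ' * Δ := by
    refine atom_induction ν hν0 hνm _ ⟨1, by rw [one_mul, mul_one]⟩ ?_ ?_
    · intro a ha
      obtain ⟨d, hd1, hd2⟩ := hσ (σ.symm ⟨a, ha⟩)
      have hsa : ((σ (σ.symm ⟨a, ha⟩) : {x : M // IsMonAtom x}) : M) = a := by
        rw [Equiv.apply_symm_apply]
      rw [hsa] at hd2
      refine ⟨(σ.symm ⟨a, ha⟩ : M), ?_⟩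
      conv_lhs => rw [hd1]
      rw [mul_assoc, ← hd2]
    · rintro a b ⟨a', ha'⟩ ⟨b', hb'⟩
      exact ⟨a' * b', by rw [← mul_assoc, ha', mul_assoc, hb', ← mul_assoc]⟩
  have hRpow : ∀ (n : ℕ) (γ : M), ∃ γ' : M, Δ ^ n * γ = γ' * Δ ^ n := by
    intro n
    induction n with
    | zero => exact fun γ => ⟨γ, by rw [pow_zero, one_mul, mul_one]⟩
    | succ n ih =>
      intro γ
      obtain ⟨γ₁, h1⟩ := hR γ
      obtain ⟨γ₂, h2⟩ := ih γ₁
      exact ⟨γ₂, by rw [pow_succ, mul_assoc, h1, ← mul_assoc, h2, mul_assoc]⟩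
  have hQpow : ∀ (n : ℕ) (γ : M), ∃ γ' : M, γ * Δ ^ n = Δ ^ n * γ' := by
    intro n
    induction n with
    | zero => exact fun γ => ⟨γ, by rw [pow_zero, one_mul, mul_one]⟩
    | succ n ih =>
      intro γ
      obtain ⟨γ₁, h1⟩ := ih γ
      obtain ⟨γ₂, h2⟩ := hQ γ₁
      exact ⟨γ₂, by rw [pow_succ, ← mul_assoc, h1, mul_assoc, h2, ← mul_assoc]⟩
  -- every element right-divides some power of Δ
  have hP : ∀ γ : M, ∃ (l : ℕ) (c : M), Δ ^ l = c * γ := by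
    refine atom_induction ν hν0 hνm _ ⟨0, 1, by rw [pow_zero, mul_one]⟩ ?_ ?_
    · intro a ha
      obtain ⟨d, hd1, hd2⟩ := hσ (σ.symm ⟨a, ha⟩)
      have hsa : ((σ (σ.symm ⟨a, ha⟩) : {x : M // IsMonAtom x}) : M) = a := by
        rw [Equiv.apply_symm_apply]
      rw [hsa] at hd2
      exact ⟨1, d, by rw [pow_one, hd2]⟩
    · rintro a b ⟨l, c, hc⟩ ⟨m, c', hc'⟩
      obtain ⟨c'', hc''⟩ := hRpow l c'
      refine ⟨l + m, c'' * c, ?_⟩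
      rw [pow_add, hc', ← mul_assoc, hc'', hc]
      simp only [mul_assoc]
  -- every element left-divides some power of Δ
  have hP' : ∀ γ : M, ∃ (l : ℕ) (c : M), Δ ^ l = γ * c := by
    refine atom_induction ν hν0 hνm _ ⟨0, 1, by rw [pow_zero, one_mul]⟩ ?_ ?_
    · intro a ha
      obtain ⟨d, hd1, hd2⟩ := hσ ⟨a, ha⟩
      exact ⟨1, d, by rw [pow_one, hd1]⟩
    · rintro a b ⟨l, c, hc⟩ ⟨m, c', hc'⟩
      obtain ⟨c'', hc''⟩ := hQpow m c
      refine ⟨l + m, c' * c'', ?_⟩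
      rw [pow_add, hc, mul_assoc, hc'', hc']
      simp only [mul_assoc]
  -- common left multiples exist
  have hclm : ∀ u v : M, ∃ m a b : M, m = a * u ∧ m = b * v := by
    intro u v
    obtain ⟨l, c, hc⟩ := hP u
    obtain ⟨l', c', hc'⟩ := hP v
    refine ⟨Δ ^ (l + l'), Δ ^ l' * c, Δ ^ l * c', ?_, ?_⟩
    · rw [add_comm, pow_add, hc, mul_assoc]
    · rw [pow_add, hc', mul_assoc]
  -- common right multiples exist
  have hcrm : ∀ u v : M, ∃ m a b : M, m = u * a ∧ m = v * b := by
    intro u v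
    obtain ⟨l, c, hc⟩ := hP' u
    obtain ⟨l', c', hc'⟩ := hP' v
    refine ⟨Δ ^ (l + l'), c * Δ ^ l', c' * Δ ^ l, ?_, ?_⟩
    · rw [pow_add, hc, mul_assoc]
    · rw [add_comm, pow_add, hc', mul_assoc]
  refine ⟨⟨lcm_to_gcd_left ν hν0 hνm, gcd_to_lcm_left ν hν0 hνm hclm⟩,
          ⟨lcm_to_gcd_right ν hν0 hνm, gcd_to_lcm_right ν hν0 hνm hcrm⟩⟩
end

section
/- Let M be a cancellative atomic monoid carrying a fundamental element, and let δ ∈ M be an element for which there is a map σ from the atoms of M to M with s·δ = δ·σ(s) for every atom s. Then δ is quasi-central, i.e., σ maps atoms to atoms and is a permutation of the atoms. -/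
/-!
Since `M` is generated by atoms, conjugation by `δ`, `x * δ = δ * φ x`, is defined on all of
`M`, and by cancellativity it is an injective endomorphism `φ`. The fundamental element `Δ` permutes the atoms,
so a suitable power `z` of `Δ` is central; then `φ z = z`, and `φ` maps the set of two-sided
factors of `z` injectively into itself. That set is finite, since the norm bounds the number
of atoms in a factorisation, so `φ` is a bijection of it, and as it is closed under taking
factors and contains every atom, `φ` sends atoms to atoms. An injective self-map of the
finite set of atoms is a permutation.
-/

open Function Set

section

variable {M : Type*} [Monoid M]

lemma IsCancellative.isLeftRegular (hcan : IsCancellative M) (a : M) : IsLeftRegular a :=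
  fun x y h => hcan a 1 x y (by simpa using h)

lemma IsCancellative.isRightRegular (hcan : IsCancellative M) (a : M) : IsRightRegular a :=
  fun x y h => hcan 1 a x y (by simpa using h)

lemma GeneratedByAtoms.induction {p : M → Prop} (hgen : GeneratedByAtoms M)
    (atom : ∀ a, IsMonAtom a → p a) (one : p 1) (mul : ∀ x y, p x → p y → p (x * y))
    (x : M) : p x :=
  Submonoid.closure_induction (motive := fun x _ => p x) atom one (fun x y _ _ => mul x y)
    (hgen ▸ Submonoid.mem_top x)

lemma GeneratedByAtoms.exists_list (hgen : GeneratedByAtoms M) (x : M) :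
    ∃ l : List {a : M // IsMonAtom a}, (l.map (↑)).prod = x := by
  obtain ⟨l, hl, rfl⟩ := Submonoid.exists_list_of_mem_closure (hgen ▸ Submonoid.mem_top x)
  lift l to List {a : M // IsMonAtom a} using hl
  exact ⟨l, rfl⟩

lemma GeneratedByAtoms.commute_of_forall_atom (hgen : GeneratedByAtoms M) {z : M}
    (h : ∀ a, IsMonAtom a → Commute a z) (x : M) : Commute x z :=
  hgen.induction h (Commute.one_left z) (fun _ _ => Commute.mul_left) x

lemma length_le_of_superadditive {ν : M → ℕ} (hν : ∀ a b, ν a + ν b ≤ ν (a * b))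
    {l : List M} (hl : ∀ a ∈ l, 0 < ν a) : l.length ≤ ν l.prod := by
  induction l with
  | nil => simp
  | cons a t ih =>
    have := hν a t.prod
    have := hl a List.mem_cons_self
    have := ih fun b hb => hl b (List.mem_cons_of_mem a hb)
    simp only [List.prod_cons, List.length_cons]
    omega

lemma finite_setOf_le_of_superadditive (hgen : GeneratedByAtoms M)
    (hfin : {a : M | IsMonAtom a}.Finite) {ν : M → ℕ} (hν0 : ∀ a, ν a = 0 → a = 1)
    (hν : ∀ a b, ν a + ν b ≤ ν (a * b)) (N : ℕ) : {x | ν x ≤ N}.Finite := by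
  have : Finite {a : M // IsMonAtom a} := hfin.to_subtype
  refine ((List.finite_length_le {a : M // IsMonAtom a} N).image
    fun l => (l.map (↑)).prod).subset fun x hx => ?_
  obtain ⟨l, rfl⟩ := hgen.exists_list x
  refine ⟨l, (le_trans ?_ hx : l.length ≤ N), rfl⟩
  simpa using length_le_of_superadditive hν (l := l.map (↑)) (by
    simp only [List.mem_map]
    rintro _ ⟨a, -, rfl⟩
    exact Nat.pos_of_ne_zero fun h => a.2.1 (hν0 _ h))

lemma GeneratedByAtoms.exists_mul_eq_mul (hgen : GeneratedByAtoms M) {δ : M}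
    (h : ∀ s : {a : M // IsMonAtom a}, ∃ y, (s : M) * δ = δ * y) (x : M) :
    ∃ y, x * δ = δ * y :=
  hgen.induction (p := fun x => ∃ y, x * δ = δ * y) (fun a ha => h ⟨a, ha⟩) ⟨1, by simp⟩
    (fun _ _ ⟨x', hx'⟩ ⟨y', hy'⟩ => ⟨x' * y', (SemiconjBy.mul_right hx'.symm hy'.symm).eq.symm⟩) x

section Conjugation

variable {δ : M} (hδ : IsLeftRegular δ) (h : ∀ x : M, ∃ y, x * δ = δ * y)

/-- The endomorphism `x ↦ δ⁻¹ x δ`, defined when every `x * δ` is left divisible by `δ`. -/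
noncomputable def conjHom : M →* M where
  toFun x := (h x).choose
  map_one' := hδ <| (h 1).choose_spec.symm.trans (by simp)
  map_mul' x y := hδ <| (h (x * y)).choose_spec.symm.trans
    (SemiconjBy.mul_right (h x).choose_spec.symm (h y).choose_spec.symm).eq.symm

lemma mul_eq_mul_conjHom (x : M) : x * δ = δ * conjHom hδ h x :=
  (h x).choose_spec

lemma conjHom_eq_of_mul_eq {x y : M} (hxy : x * δ = δ * y) : conjHom hδ h x = y :=
  hδ <| (mul_eq_mul_conjHom hδ h x).symm.trans hxy

lemma conjHom_injective (hδ' : IsRightRegular δ) : Injective (conjHom hδ h) := fun x y hxy =>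
  hδ' (show x * δ = y * δ by rw [mul_eq_mul_conjHom hδ h, mul_eq_mul_conjHom hδ h y, hxy])

end Conjugation

def factorSet (z : M) : Set M := {x | ∃ a b, a * x * b = z}

lemma mem_factorSet_of_dvd {x z : M} (h : x ∣ z) : x ∈ factorSet z := by
  obtain ⟨c, rfl⟩ := h
  exact ⟨1, c, by simp⟩

lemma mem_factorSet_of_mul_left {x y z : M} (h : x * y ∈ factorSet z) : x ∈ factorSet z := by
  obtain ⟨a, b, rfl⟩ := h
  exact ⟨a, y * b, by simp only [mul_assoc]⟩

lemma mem_factorSet_of_mul_right {x y z : M} (h : x * y ∈ factorSet z) : y ∈ factorSet z := by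
  obtain ⟨a, b, rfl⟩ := h
  exact ⟨a * x, b, by simp only [mul_assoc]⟩

lemma mapsTo_factorSet (φ : M →* M) {z : M} (hz : φ z = z) :
    MapsTo φ (factorSet z) (factorSet z) := by
  rintro x ⟨a, b, rfl⟩
  exact ⟨φ a, φ b, by simp only [map_mul] at hz ⊢; exact hz⟩

lemma finite_factorSet (hgen : GeneratedByAtoms M) (hfin : {a : M | IsMonAtom a}.Finite)
    (hat : IsAtomicMonoid M) (z : M) : (factorSet z).Finite := by
  obtain ⟨ν, hν0, hν⟩ := hat
  refine (finite_setOf_le_of_superadditive hgen hfin (fun a => (hν0 a).mp) hν (ν z)).subset ?_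
  rintro x ⟨a, b, rfl⟩
  have := hν a x
  have := hν (a * x) b
  simp only [mem_ofPred_eq]
  omega

/-- `φ` is a bijection of the finite set of factors of `z`, which is closed under taking
factors, so a factorisation of `φ s` pulls back to one of `s`. -/
lemma IsMonAtom.map_of_mem_factorSet {φ : M →* M} (hφ : Injective φ) {z : M} (hz : φ z = z)
    (hfin : (factorSet z).Finite) {s : M} (hs : IsMonAtom s) (hsz : s ∈ factorSet z) :
    IsMonAtom (φ s) := by
  refine ⟨fun h1 => hs.1 (hφ (h1.trans φ.map_one.symm)), fun b c hbc => ?_⟩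
  have hsurj : SurjOn φ (factorSet z) (factorSet z) :=
    ((hfin.injOn_iff_bijOn_of_mapsTo (mapsTo_factorSet φ hz)).mp hφ.injOn).surjOn
  have hbc_mem : b * c ∈ factorSet z := hbc ▸ mapsTo_factorSet φ hz hsz
  obtain ⟨b', -, rfl⟩ := hsurj (mem_factorSet_of_mul_left hbc_mem)
  obtain ⟨c', -, rfl⟩ := hsurj (mem_factorSet_of_mul_right hbc_mem)
  rw [← map_mul] at hbc
  refine (hs.2 b' c' (hφ hbc)).imp ?_ ?_ <;> rintro rfl <;> exact map_one φ

lemma mul_pow_eq_pow_mul_perm {Δ : M} {σ : Equiv.Perm {a : M // IsMonAtom a}}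
    (h : ∀ s : {a : M // IsMonAtom a}, (s : M) * Δ = Δ * σ s) (n : ℕ)
    (s : {a : M // IsMonAtom a}) : (s : M) * Δ ^ n = Δ ^ n * (σ ^ n) s := by
  induction n generalizing s with
  | zero => simp
  | succ n ih =>
    rw [pow_succ' Δ, pow_succ, Equiv.Perm.mul_apply, ← mul_assoc, h, mul_assoc, ih, mul_assoc]

lemma IsFundamental.exists_forall_commute_forall_dvd (hgen : GeneratedByAtoms M)
    (hfin : {a : M | IsMonAtom a}.Finite) {Δ : M} (hΔ : IsFundamental Δ) :
    ∃ z : M, (∀ x, Commute x z) ∧ ∀ s, IsMonAtom s → s ∣ z := by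
  obtain ⟨σ, hσ⟩ := hΔ
  have : Finite {a : M // IsMonAtom a} := hfin.to_subtype
  obtain ⟨m, hm, hσm⟩ := (isOfFinOrder_of_finite σ).exists_pow_eq_one
  have hqc : ∀ s : {a : M // IsMonAtom a}, (s : M) * Δ = Δ * σ s := fun s => by
    obtain ⟨d, h1, h2⟩ := hσ s
    calc (s : M) * Δ = s * (d * σ s) := by rw [← h2]
      _ = Δ * σ s := by rw [← mul_assoc, ← h1]
  refine ⟨Δ ^ m, hgen.commute_of_forall_atom fun s hs => ?_, fun s hs => ?_⟩
  · show s * Δ ^ m = Δ ^ m * s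
    simpa [hσm] using mul_pow_eq_pow_mul_perm hqc m ⟨s, hs⟩
  · obtain ⟨d, h1, -⟩ := hσ ⟨s, hs⟩
    exact (Dvd.intro d h1.symm).trans (dvd_pow_self Δ hm.ne')

end

/-- If δ admits a map σ from atoms to the monoid with s·δ = δ·σ(s) for every atom s,
then σ maps atoms to atoms, restricts to a permutation of the atoms, and δ is
quasi-central. -/
theorem stmt_9 {M : Type*} [Monoid M] (hcan : IsCancellative M) (hat : IsAtomicMonoid M)
    (hgen : GeneratedByAtoms M) (hfin : {a : M | IsMonAtom a}.Finite)
    (hF : ∃ Δ : M, IsFundamental Δ)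
    (δ : M) (σ : {a : M // IsMonAtom a} → M)
    (hσ : ∀ s : {a : M // IsMonAtom a}, (s : M) * δ = δ * σ s) :
    (∃ σ' : {a : M // IsMonAtom a} ≃ {a : M // IsMonAtom a},
      ∀ s : {a : M // IsMonAtom a}, ((σ' s : M) = σ s)) ∧ IsQuasiCentral δ := by
  have : Finite {a : M // IsMonAtom a} := hfin.to_subtype
  have hδ := hcan.isLeftRegular δ
  have hconj := hgen.exists_mul_eq_mul fun s => ⟨σ s, hσ s⟩
  set φ := conjHom hδ hconj
  have hφ : Injective φ := conjHom_injective hδ hconj (hcan.isRightRegular δ)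
  have hφσ : ∀ s : {a : M // IsMonAtom a}, φ s = σ s := fun s =>
    conjHom_eq_of_mul_eq hδ hconj (hσ s)
  obtain ⟨Δ, hΔ⟩ := hF
  obtain ⟨z, hz, hdvd⟩ := hΔ.exists_forall_commute_forall_dvd hgen hfin
  have hφz : φ z = z := conjHom_eq_of_mul_eq hδ hconj (hz δ).eq.symm
  let τ (s : {a : M // IsMonAtom a}) : {a : M // IsMonAtom a} :=
    ⟨φ s, s.2.map_of_mem_factorSet hφ hφz (finite_factorSet hgen hfin hat z)
      (mem_factorSet_of_dvd (hdvd s s.2))⟩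
  have hτ : Bijective τ := Finite.injective_iff_bijective.mp fun s t hst =>
    Subtype.ext (hφ (congrArg Subtype.val hst))
  refine ⟨⟨.ofBijective τ hτ, hφσ⟩, .ofBijective τ hτ, fun s => ?_⟩
  exact (hσ s).trans (congrArg _ (hφσ s).symm)
end

section
/- In a Garside monoid M with unique minimal fundamental element Δ̂, every indecomposable quasi-central element divides Δ̂ from the left and from the right; in particular, M is tame. -/
/-- A fundamental element is minimal if any fundamental element dividing it from the
left or the right coincides with it. -/
def IsMinimalFundamental {M : Type*} [Monoid M] (Δ : M) : Prop :=
  IsFundamental Δ ∧ ∀ Δ' : M, IsFundamental Δ' →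
    ((∃ w, Δ = Δ' * w) ∨ (∃ w, Δ = w * Δ')) → Δ' = Δ

/-- An indecomposable quasi-central element: a nontrivial quasi-central element which is
not a product of two nontrivial quasi-central elements. -/
def IsIndecomposableQC {M : Type*} [Monoid M] (Δ : M) : Prop :=
  IsQuasiCentral Δ ∧ Δ ≠ 1 ∧
    ¬ ∃ a b : M, IsQuasiCentral a ∧ IsQuasiCentral b ∧ a ≠ 1 ∧ b ≠ 1 ∧ Δ = a * b

/-- Tameness: every indecomposable quasi-central element divides some minimal
fundamental element from the left and the right. -/
def IsTame (M : Type*) [Monoid M] : Prop :=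
  ∀ Δ₀ : M, IsIndecomposableQC Δ₀ →
    ∃ Δ : M, IsMinimalFundamental Δ ∧ (∃ w, Δ = Δ₀ * w) ∧ (∃ w, Δ = w * Δ₀)

section AuxDev
variable {M : Type*} [Monoid M]

lemma rcancel (hcan : IsCancellative M) {a x y : M} (h : x * a = y * a) : x = y :=
  hcan 1 a x y (by simpa using h)

lemma mul_eq_one'' (hat : IsAtomicMonoid M) {u v : M} (h : u * v = 1) : u = 1 ∧ v = 1 := by
  obtain ⟨ν, h0, hadd⟩ := hat
  have h1 : ν (u * v) = 0 := by rw [h]; exact (h0 1).mpr rfl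
  have h2 := hadd u v
  exact ⟨(h0 u).mp (by omega), (h0 v).mp (by omega)⟩

lemma sandwich (hat : IsAtomicMonoid M) {x z z' : M} (h : x = z' * (x * z)) :
    z' = 1 ∧ z = 1 := by
  obtain ⟨ν, h0, hadd⟩ := hat
  have h1 := hadd z' (x * z)
  have h2 := hadd x z
  rw [← h] at h1
  exact ⟨(h0 z').mp (by omega), (h0 z).mp (by omega)⟩

lemma gen_induction (hgen : GeneratedByAtoms M) (P : M → Prop) (h1 : P 1)
    (hatom : ∀ a : M, IsMonAtom a → P a) (hmul : ∀ x y : M, P x → P y → P (x * y)) :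
    ∀ x : M, P x := by
  intro x
  have hx : x ∈ Submonoid.closure {a : M | IsMonAtom a} := by
    rw [hgen]; exact Submonoid.mem_top x
  exact Submonoid.closure_induction (fun a ha => hatom a ha) h1
    (fun a b _ _ pa pb => hmul a b pa pb) hx

/-- The conjugation system attached to an element satisfying the two-sided
translation property. -/
lemma conj_system (hcan : IsCancellative M) {q : M}
    (h1 : ∀ x : M, ∃ y, x * q = q * y) (h2 : ∀ y : M, ∃ x, x * q = q * y) :
    ∃ F F' : M → M,
      (∀ x, x * q = q * F x) ∧ (∀ x, F' x * q = q * x) ∧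
      (∀ x y, F (x * y) = F x * F y) ∧ (∀ x y, F' (x * y) = F' x * F' y) ∧
      (∀ x, F (F' x) = x) ∧ (∀ x, F' (F x) = x) ∧
      (∀ a, IsMonAtom a → IsMonAtom (F a)) ∧ (∀ a, IsMonAtom a → IsMonAtom (F' a)) := by
  choose F hF using h1
  choose F' hF' using h2
  have Fmul : ∀ x y, F (x * y) = F x * F y := by
    intro x y
    have : q * F (x * y) = q * (F x * F y) := by
      rw [← hF (x * y)]
      calc x * y * q = x * (y * q) := mul_assoc _ _ _
        _ = x * (q * F y) := by rw [hF y]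
        _ = x * q * F y := (mul_assoc _ _ _).symm
        _ = q * F x * F y := by rw [hF x]
        _ = q * (F x * F y) := mul_assoc _ _ _
    exact lcancel hcan this
  have F'mul : ∀ x y, F' (x * y) = F' x * F' y := by
    intro x y
    have : F' (x * y) * q = F' x * F' y * q := by
      rw [hF' (x * y)]
      calc q * (x * y) = q * x * y := (mul_assoc _ _ _).symm
        _ = F' x * q * y := by rw [hF' x]
        _ = F' x * (q * y) := mul_assoc _ _ _
        _ = F' x * (F' y * q) := by rw [hF' y]
        _ = F' x * F' y * q := (mul_assoc _ _ _).symm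
    exact rcancel hcan this
  have FF' : ∀ x, F (F' x) = x := by
    intro x
    have : q * F (F' x) = q * x := by rw [← hF (F' x), hF' x]
    exact lcancel hcan this
  have F'F : ∀ x, F' (F x) = x := by
    intro x
    have : F' (F x) * q = x * q := by rw [hF' (F x), hF x]
    exact rcancel hcan this
  refine ⟨F, F', hF, hF', Fmul, F'mul, FF', F'F, ?_, ?_⟩
  · intro a ha
    constructor
    · intro hFa
      have : a * q = 1 * q := by rw [hF a, hFa, mul_one, one_mul]
      exact ha.1 (rcancel hcan this)
    · intro u v huv
      have key : a * q = (F' u * F' v) * q := by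
        calc a * q = q * F a := hF a
          _ = q * (u * v) := by rw [huv]
          _ = q * u * v := (mul_assoc _ _ _).symm
          _ = F' u * q * v := by rw [hF' u]
          _ = F' u * (q * v) := mul_assoc _ _ _
          _ = F' u * (F' v * q) := by rw [hF' v]
          _ = F' u * F' v * q := (mul_assoc _ _ _).symm
      have ha2 := ha.2 _ _ (rcancel hcan key)
      rcases ha2 with h | h
      · left
        have : q * u = q * 1 := by rw [← hF' u, h, one_mul, mul_one]
        exact lcancel hcan this
      · right
        have : q * v = q * 1 := by rw [← hF' v, h, one_mul, mul_one]
        exact lcancel hcan this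
  · intro a ha
    constructor
    · intro hFa
      have : q * a = q * 1 := by rw [← hF' a, hFa, one_mul, mul_one]
      exact ha.1 (lcancel hcan this)
    · intro u v huv
      have key : q * a = q * (F u * F v) := by
        calc q * a = F' a * q := (hF' a).symm
          _ = u * v * q := by rw [huv]
          _ = u * (v * q) := mul_assoc _ _ _
          _ = u * (q * F v) := by rw [hF v]
          _ = u * q * F v := (mul_assoc _ _ _).symm
          _ = q * F u * F v := by rw [hF u]
          _ = q * (F u * F v) := mul_assoc _ _ _
      have ha2 := ha.2 _ _ (lcancel hcan key)
      rcases ha2 with h | h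
      · left
        have : u * q = 1 * q := by rw [hF u, h, mul_one, one_mul]
        exact rcancel hcan this
      · right
        have : v * q = 1 * q := by rw [hF v, h, mul_one, one_mul]
        exact rcancel hcan this

end AuxDev

section AuxDev2
variable {M : Type*} [Monoid M]

/-- Transport of fundamentality along a mutually-inverse multiplicative pair. -/
lemma fund_transport {F F' : M → M}
    (hFmul : ∀ x y, F (x * y) = F x * F y)
    (hFF' : ∀ x, F (F' x) = x) (hF'F : ∀ x, F' (F x) = x)
    (hFa : ∀ a : M, IsMonAtom a → IsMonAtom (F a))
    (hF'a : ∀ a : M, IsMonAtom a → IsMonAtom (F' a))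
    {Δ : M} (hΔ : IsFundamental Δ) : IsFundamental (F Δ) := by
  obtain ⟨σ, hσ⟩ := hΔ
  let σF : {a : M // IsMonAtom a} ≃ {a : M // IsMonAtom a} :=
    { toFun := fun s => ⟨F s.1, hFa s.1 s.2⟩
      invFun := fun s => ⟨F' s.1, hF'a s.1 s.2⟩
      left_inv := fun s => Subtype.ext (hF'F s.1)
      right_inv := fun s => Subtype.ext (hFF' s.1) }
  refine ⟨σF.symm.trans (σ.trans σF), ?_⟩
  intro t
  obtain ⟨d, hd1, hd2⟩ := hσ (σF.symm t)
  refine ⟨F d, ?_, ?_⟩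
  · have : F Δ = F ((σF.symm t : M) * d) := by rw [← hd1]
    rw [this, hFmul]
    congr 1
    show F (F' t.1) = t.1
    exact hFF' t.1
  · have : F Δ = F (d * (σ (σF.symm t) : M)) := by rw [← hd2]
    rw [this, hFmul]
    rfl

/-- A quasi-central element satisfies the two-sided translation property. -/
lemma qc_pair (hgen : GeneratedByAtoms M) {q : M} (hq : IsQuasiCentral q) :
    (∀ x : M, ∃ y, x * q = q * y) ∧ (∀ y : M, ∃ x, x * q = q * y) := by
  obtain ⟨σ, hσ⟩ := hq
  constructor
  · refine gen_induction hgen (fun x => ∃ y, x * q = q * y) ⟨1, by rw [one_mul, mul_one]⟩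
      ?_ ?_
    · intro a ha
      exact ⟨(σ ⟨a, ha⟩ : M), hσ ⟨a, ha⟩⟩
    · rintro x x' ⟨y, hy⟩ ⟨y', hy'⟩
      refine ⟨y * y', ?_⟩
      calc x * x' * q = x * (x' * q) := mul_assoc _ _ _
        _ = x * (q * y') := by rw [hy']
        _ = x * q * y' := (mul_assoc _ _ _).symm
        _ = q * y * y' := by rw [hy]
        _ = q * (y * y') := mul_assoc _ _ _
  · refine gen_induction hgen (fun y => ∃ x, x * q = q * y) ⟨1, by rw [one_mul, mul_one]⟩
      ?_ ?_
    · intro a ha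
      refine ⟨(σ.symm ⟨a, ha⟩ : M), ?_⟩
      have := hσ (σ.symm ⟨a, ha⟩)
      rwa [σ.apply_symm_apply] at this
    · rintro y y' ⟨x, hx⟩ ⟨x', hx'⟩
      refine ⟨x * x', ?_⟩
      calc x * x' * q = x * (x' * q) := mul_assoc _ _ _
        _ = x * (q * y') := by rw [hx']
        _ = x * q * y' := (mul_assoc _ _ _).symm
        _ = q * y * y' := by rw [hx]
        _ = q * (y * y') := mul_assoc _ _ _

/-- Conversely, the two-sided translation property gives quasi-centrality. -/
lemma qc_of_pair (hcan : IsCancellative M) {q : M}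
    (h1 : ∀ x : M, ∃ y, x * q = q * y) (h2 : ∀ y : M, ∃ x, x * q = q * y) :
    IsQuasiCentral q := by
  obtain ⟨F, F', hF, hF', _, _, hFF', hF'F, hFa, hF'a⟩ := conj_system hcan h1 h2
  refine ⟨{ toFun := fun s => ⟨F s.1, hFa s.1 s.2⟩
            invFun := fun s => ⟨F' s.1, hF'a s.1 s.2⟩
            left_inv := fun s => Subtype.ext (hF'F s.1)
            right_inv := fun s => Subtype.ext (hFF' s.1) }, ?_⟩
  intro s
  exact hF s.1

/-- Every fundamental element is quasi-central. -/
lemma fund_qc {Δ : M} (hΔ : IsFundamental Δ) : IsQuasiCentral Δ := by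
  obtain ⟨σ, hσ⟩ := hΔ
  refine ⟨σ, fun s => ?_⟩
  obtain ⟨d, hd1, hd2⟩ := hσ s
  rw [hd1, mul_assoc, ← hd2, ← hd1]

/-- Every quasi-central element commutes with `Δhat`. -/
lemma comm_hat (hcan : IsCancellative M) (hat : IsAtomicMonoid M)
    {Δhat : M} (hhat : IsFundamental Δhat)
    (hdiv : ∀ Δ : M, IsFundamental Δ → (∃ w, Δ = Δhat * w) ∧ (∃ w, Δ = w * Δhat))
    {q : M} (h1 : ∀ x : M, ∃ y, x * q = q * y) (h2 : ∀ y : M, ∃ x, x * q = q * y) :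
    q * Δhat = Δhat * q := by
  obtain ⟨F, F', hF, hF', hFmul, hF'mul, hFF', hF'F, hFa, hF'a⟩ := conj_system hcan h1 h2
  have hD : IsFundamental (F Δhat) := fund_transport hFmul hFF' hF'F hFa hF'a hhat
  have hD' : IsFundamental (F' Δhat) := fund_transport hF'mul hF'F hFF' hF'a hFa hhat
  obtain ⟨w₁, hw₁⟩ := (hdiv _ hD).1
  obtain ⟨w₂, hw₂⟩ := (hdiv _ hD').1
  have key : Δhat * 1 = Δhat * (w₁ * F w₂) := by
    rw [mul_one]
    calc Δhat = F (F' Δhat) := (hFF' Δhat).symm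
      _ = F (Δhat * w₂) := by rw [← hw₂]
      _ = F Δhat * F w₂ := hFmul _ _
      _ = Δhat * w₁ * F w₂ := by rw [← hw₁]
      _ = Δhat * (w₁ * F w₂) := mul_assoc _ _ _
  have h11 : w₁ * F w₂ = 1 := (lcancel hcan key).symm
  have hw1 : w₁ = 1 := (mul_eq_one'' hat h11).1
  have : F Δhat = Δhat := by rw [hw₁, hw1, mul_one]
  have hq' := hF Δhat
  rw [this] at hq'
  exact hq'.symm

/-- Every nontrivial element has an atom as left divisor. -/
lemma atom_left_div (hgen : GeneratedByAtoms M) {x : M} (hx : x ≠ 1) :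
    ∃ s y : M, IsMonAtom s ∧ x = s * y := by
  have H : ∀ z : M, z = 1 ∨ ∃ s y : M, IsMonAtom s ∧ z = s * y := by
    refine gen_induction hgen _ (Or.inl rfl) ?_ ?_
    · intro a ha
      exact Or.inr ⟨a, 1, ha, (mul_one a).symm⟩
    · rintro u v (rfl | ⟨s, y, hs, rfl⟩) hv
      · simpa using hv
      · exact Or.inr ⟨s, y * v, hs, mul_assoc _ _ _⟩
  rcases H x with h | h
  · exact absurd h hx
  · exact h

end AuxDev2

section AuxDev3
variable {M : Type*} [Monoid M]

/-- Every element left-divides some power of a fundamental element. -/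
lemma pow_mult (hcan : IsCancellative M) (hat : IsAtomicMonoid M)
    (hgen : GeneratedByAtoms M) {Δhat : M} (hhat : IsFundamental Δhat) :
    ∀ x : M, ∃ n : ℕ, ∃ z : M, Δhat ^ n = x * z := by
  obtain ⟨ν, h0, hadd⟩ := hat
  have hpair := qc_pair hgen (fund_qc hhat)
  have hQ1 := hpair.1
  have hpow : ∀ (n : ℕ) (x : M), ∃ y, x * Δhat ^ n = Δhat ^ n * y := by
    intro n
    induction n with
    | zero => exact fun x => ⟨x, by rw [pow_zero, one_mul, mul_one]⟩
    | succ n ih =>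
      intro x
      obtain ⟨y, hy⟩ := ih x
      obtain ⟨y', hy'⟩ := hQ1 y
      refine ⟨y', ?_⟩
      rw [pow_succ]
      calc x * (Δhat ^ n * Δhat) = x * Δhat ^ n * Δhat := (mul_assoc _ _ _).symm
        _ = Δhat ^ n * y * Δhat := by rw [hy]
        _ = Δhat ^ n * (y * Δhat) := mul_assoc _ _ _
        _ = Δhat ^ n * (Δhat * y') := by rw [hy']
        _ = Δhat ^ n * Δhat * y' := (mul_assoc _ _ _).symm
  have key : ∀ N : ℕ, ∀ x : M, ν x ≤ N → ∃ n : ℕ, ∃ z : M, Δhat ^ n = x * z := by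
    intro N
    induction N with
    | zero =>
      intro x hx
      have hx1 : x = 1 := (h0 x).mp (Nat.le_zero.mp hx)
      exact ⟨0, 1, by rw [pow_zero, hx1, one_mul]⟩
    | succ N ih =>
      intro x hx
      by_cases hx1 : x = 1
      · exact ⟨0, 1, by rw [pow_zero, hx1, one_mul]⟩
      · obtain ⟨s, y, hs, rfl⟩ := atom_left_div hgen hx1
        have hνs : ν s ≠ 0 := fun h => hs.1 ((h0 s).mp h)
        have hy : ν y ≤ N := by have := hadd s y; omega
        obtain ⟨n, z, hz⟩ := ih y hy
        obtain ⟨σ, hσ⟩ := hhat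
        obtain ⟨d, hd1, -⟩ := hσ ⟨s, hs⟩
        obtain ⟨d₂, hd₂⟩ := hpow n d
        refine ⟨n + 1, z * d₂, ?_⟩
        calc Δhat ^ (n + 1) = Δhat * Δhat ^ n := pow_succ' _ _
          _ = s * d * Δhat ^ n := by rw [← hd1]
          _ = s * (d * Δhat ^ n) := mul_assoc _ _ _
          _ = s * (Δhat ^ n * d₂) := by rw [hd₂]
          _ = s * (y * z * d₂) := by rw [hz]
          _ = s * (y * (z * d₂)) := by rw [mul_assoc y z d₂]
          _ = s * y * (z * d₂) := (mul_assoc _ _ _).symm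
  intro x
  exact key (ν x) x le_rfl

end AuxDev3

section MainDev
variable {M : Type*} [Monoid M]

lemma main_div (hcan : IsCancellative M) (hat : IsAtomicMonoid M)
    (hgen : GeneratedByAtoms M)
    (hlcm : ∀ u v : M, (∃ m, IsRightLcm u v m) ∧ (∃ m, IsLeftLcm u v m))
    (Δhat : M) (hhat : IsFundamental Δhat)
    (hdiv : ∀ Δ : M, IsFundamental Δ → (∃ w, Δ = Δhat * w) ∧ (∃ w, Δ = w * Δhat))
    {q : M} (hq : IsIndecomposableQC q) :
    (∃ w, Δhat = q * w) ∧ (∃ w, Δhat = w * q) := by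
  obtain ⟨hqc, hqne, hind⟩ := hq
  obtain ⟨hQ1, hQ2⟩ := qc_pair hgen hqc
  obtain ⟨hD1, hD2⟩ := qc_pair hgen (fund_qc hhat)
  have comm : q * Δhat = Δhat * q := comm_hat hcan hat hhat hdiv hQ1 hQ2
  obtain ⟨⟨m, hm⟩, ⟨m'', hm''⟩⟩ := hlcm q Δhat
  obtain ⟨⟨a, ha⟩, ⟨b, hb⟩, hmmin⟩ := hm
  obtain ⟨⟨a₃, ha₃⟩, ⟨b₃, hb₃⟩, hm''min⟩ := hm''
  -- Step 3a : m * q = q * m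
  obtain ⟨b₁, hb₁⟩ := hQ1 b
  have hyd : m * q = q * (Δhat * b₁) := by
    calc m * q = Δhat * b * q := by rw [hb]
      _ = Δhat * (b * q) := mul_assoc _ _ _
      _ = Δhat * (q * b₁) := by rw [hb₁]
      _ = Δhat * q * b₁ := (mul_assoc _ _ _).symm
      _ = q * Δhat * b₁ := by rw [← comm]
      _ = q * (Δhat * b₁) := mul_assoc _ _ _
  have hya : m * q = q * (a * q) := by rw [ha]; exact mul_assoc _ _ _
  have hyeq : a * q = Δhat * b₁ := lcancel hcan (hya.symm.trans hyd)
  obtain ⟨a₁, ha₁⟩ := hQ1 a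
  obtain ⟨z, hzz⟩ := hmmin (a * q) ⟨a₁, ha₁⟩ ⟨b₁, hyeq⟩
  obtain ⟨b₂, hb₂⟩ := hQ2 b
  obtain ⟨a₂, ha₂⟩ := hQ2 a
  have hxa : (q * a₂) * q = q * m := by
    calc q * a₂ * q = q * (a₂ * q) := mul_assoc _ _ _
      _ = q * (q * a) := by rw [ha₂]
      _ = q * m := by rw [← ha]
  have hxd : (Δhat * b₂) * q = q * m := by
    calc Δhat * b₂ * q = Δhat * (b₂ * q) := mul_assoc _ _ _
      _ = Δhat * (q * b) := by rw [hb₂]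
      _ = Δhat * q * b := (mul_assoc _ _ _).symm
      _ = q * Δhat * b := by rw [← comm]
      _ = q * (Δhat * b) := mul_assoc _ _ _
      _ = q * m := by rw [← hb]
  have hxeq : q * a₂ = Δhat * b₂ := rcancel hcan (hxa.trans hxd.symm)
  obtain ⟨z', hzz'⟩ := hmmin (q * a₂) ⟨a₂, rfl⟩ ⟨b₂, hxeq⟩
  have hkey : m * q = m * (z' * (q * z)) := by
    calc m * q = q * (a * q) := hya
      _ = q * (m * z) := by rw [hzz]
      _ = q * m * z := (mul_assoc _ _ _).symm
      _ = (q * a₂) * q * z := by rw [← hxa]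
      _ = (m * z') * q * z := by rw [hzz']
      _ = m * (z' * q) * z := by rw [mul_assoc m z' q]
      _ = m * ((z' * q) * z) := mul_assoc _ _ _
      _ = m * (z' * (q * z)) := by rw [mul_assoc z' q z]
  obtain ⟨hz'1, hz1⟩ := sandwich hat (lcancel hcan hkey)
  have ham2 : a * q = m := by rw [hzz, hz1, mul_one]
  have hmq : m * q = q * m := by rw [hya, ham2]
  -- Step 3b : m * Δhat = Δhat * m
  obtain ⟨a', ha'⟩ := hD1 a
  have hydΔ : m * Δhat = Δhat * (q * a') := by
    calc m * Δhat = q * a * Δhat := by rw [ha]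
      _ = q * (a * Δhat) := mul_assoc _ _ _
      _ = q * (Δhat * a') := by rw [ha']
      _ = q * Δhat * a' := (mul_assoc _ _ _).symm
      _ = Δhat * q * a' := by rw [comm]
      _ = Δhat * (q * a') := mul_assoc _ _ _
  have hyaΔ : m * Δhat = Δhat * (b * Δhat) := by rw [hb]; exact mul_assoc _ _ _
  have hyeqΔ : b * Δhat = q * a' := lcancel hcan (hyaΔ.symm.trans hydΔ)
  obtain ⟨b₁', hb₁'⟩ := hD1 b
  obtain ⟨zΔ, hzzΔ⟩ := hmmin (b * Δhat) ⟨a', hyeqΔ⟩ ⟨b₁', hb₁'⟩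
  obtain ⟨a₃', ha₃'⟩ := hD2 a
  obtain ⟨b₃', hb₃'⟩ := hD2 b
  have hxaΔ : (Δhat * b₃') * Δhat = Δhat * m := by
    calc Δhat * b₃' * Δhat = Δhat * (b₃' * Δhat) := mul_assoc _ _ _
      _ = Δhat * (Δhat * b) := by rw [hb₃']
      _ = Δhat * m := by rw [← hb]
  have hxdΔ : (q * a₃') * Δhat = Δhat * m := by
    calc q * a₃' * Δhat = q * (a₃' * Δhat) := mul_assoc _ _ _
      _ = q * (Δhat * a) := by rw [ha₃']
      _ = q * Δhat * a := (mul_assoc _ _ _).symm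
      _ = Δhat * q * a := by rw [comm]
      _ = Δhat * (q * a) := mul_assoc _ _ _
      _ = Δhat * m := by rw [← ha]
  have hxeqΔ : q * a₃' = Δhat * b₃' := rcancel hcan (hxdΔ.trans hxaΔ.symm)
  obtain ⟨z'Δ, hzz'Δ⟩ := hmmin (q * a₃') ⟨a₃', rfl⟩ ⟨b₃', hxeqΔ⟩
  have hkeyΔ : m * Δhat = m * (z'Δ * (Δhat * zΔ)) := by
    calc m * Δhat = Δhat * (b * Δhat) := hyaΔ
      _ = Δhat * (m * zΔ) := by rw [hzzΔ]
      _ = Δhat * m * zΔ := (mul_assoc _ _ _).symm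
      _ = (q * a₃') * Δhat * zΔ := by rw [← hxdΔ]
      _ = (m * z'Δ) * Δhat * zΔ := by rw [hzz'Δ]
      _ = m * (z'Δ * Δhat) * zΔ := by rw [mul_assoc m z'Δ Δhat]
      _ = m * ((z'Δ * Δhat) * zΔ) := mul_assoc _ _ _
      _ = m * (z'Δ * (Δhat * zΔ)) := by rw [mul_assoc z'Δ Δhat zΔ]
  obtain ⟨hz'1Δ, hz1Δ⟩ := sandwich hat (lcancel hcan hkeyΔ)
  have hbm2 : b * Δhat = m := by rw [hzzΔ, hz1Δ, mul_one]
  have hmΔ : m * Δhat = Δhat * m := by rw [hyaΔ, hbm2]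
  -- Step 5 : m = m''  (m'' is also a right common multiple; m a left one)
  obtain ⟨a₅, ha₅⟩ := hQ1 a₃
  obtain ⟨b₇, hb₇⟩ := hD1 b₃
  have hm''r : ∃ z₃, m'' = m * z₃ :=
    hmmin m'' ⟨a₅, by rw [ha₃, ha₅]⟩ ⟨b₇, by rw [hb₃, hb₇]⟩
  obtain ⟨b₈, hb₈⟩ := hD2 b
  have hml : ∃ zₘ, m = zₘ * m'' :=
    hm''min m ⟨a₂, by rw [ha₂, ← ha]⟩ ⟨b₈, by rw [hb₈, ← hb]⟩
  obtain ⟨z₃, hz₃⟩ := hm''r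
  obtain ⟨zₘ, hzₘ⟩ := hml
  have : m = zₘ * (m * z₃) := by
    calc m = zₘ * m'' := hzₘ
      _ = zₘ * (m * z₃) := by rw [hz₃]
  obtain ⟨-, hz₃1⟩ := sandwich hat this
  have hmm'' : m'' = m := by rw [hz₃, hz₃1, mul_one]
  -- Step 7 : translation across m, in both directions
  have hchi : ∀ x : M, ∃ y, x * m = m * y := by
    intro x
    obtain ⟨x₁, hx₁⟩ := hQ1 x
    obtain ⟨x₂, hx₂⟩ := hD1 x
    refine hmmin (x * m) ⟨x₁ * a, ?_⟩ ⟨x₂ * b, ?_⟩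
    · calc x * m = x * (q * a) := by rw [ha]
        _ = (x * q) * a := (mul_assoc _ _ _).symm
        _ = (q * x₁) * a := by rw [hx₁]
        _ = q * (x₁ * a) := mul_assoc _ _ _
    · calc x * m = x * (Δhat * b) := by rw [hb]
        _ = (x * Δhat) * b := (mul_assoc _ _ _).symm
        _ = (Δhat * x₂) * b := by rw [hx₂]
        _ = Δhat * (x₂ * b) := mul_assoc _ _ _
  have hchi' : ∀ y : M, ∃ x, m * y = x * m := by
    intro y
    obtain ⟨y₂, hy₂⟩ := hQ2 y
    obtain ⟨y₃, hy₃⟩ := hD2 y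
    have h := hm''min (m * y) ⟨a * y₂, ?_⟩ ⟨b * y₃, ?_⟩
    · obtain ⟨x, hx⟩ := h
      exact ⟨x, by rw [hx, hmm'']⟩
    · calc m * y = (a * q) * y := by rw [ham2]
        _ = a * (q * y) := mul_assoc _ _ _
        _ = a * (y₂ * q) := by rw [hy₂]
        _ = (a * y₂) * q := (mul_assoc _ _ _).symm
    · calc m * y = (b * Δhat) * y := by rw [hbm2]
        _ = b * (Δhat * y) := mul_assoc _ _ _
        _ = b * (y₃ * Δhat) := by rw [hy₃]
        _ = (b * y₃) * Δhat := (mul_assoc _ _ _).symm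
  -- Step 8 : the element c = qΔ and the complement r
  set c : M := q * Δhat with hc
  have hC1 : ∀ x : M, ∃ y, x * c = c * y := by
    intro x
    obtain ⟨x₁, hx₁⟩ := hQ1 x
    obtain ⟨x₁', hx₁'⟩ := hD1 x₁
    refine ⟨x₁', ?_⟩
    calc x * (q * Δhat) = (x * q) * Δhat := (mul_assoc _ _ _).symm
      _ = (q * x₁) * Δhat := by rw [hx₁]
      _ = q * (x₁ * Δhat) := mul_assoc _ _ _
      _ = q * (Δhat * x₁') := by rw [hx₁']
      _ = (q * Δhat) * x₁' := (mul_assoc _ _ _).symm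
  have hC2 : ∀ y : M, ∃ x, x * c = c * y := by
    intro y
    obtain ⟨y₂, hy₂⟩ := hD2 y
    obtain ⟨x, hx⟩ := hQ2 y₂
    refine ⟨x, ?_⟩
    calc x * (q * Δhat) = (x * q) * Δhat := (mul_assoc _ _ _).symm
      _ = (q * y₂) * Δhat := by rw [hx]
      _ = q * (y₂ * Δhat) := mul_assoc _ _ _
      _ = q * (Δhat * y) := by rw [hy₂]
      _ = (q * Δhat) * y := (mul_assoc _ _ _).symm
  obtain ⟨r, hcr⟩ := hmmin c ⟨Δhat, rfl⟩ ⟨q, comm⟩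
  have hmc : m * c = c * m := by
    calc m * (q * Δhat) = (m * q) * Δhat := (mul_assoc _ _ _).symm
      _ = (q * m) * Δhat := by rw [hmq]
      _ = q * (m * Δhat) := mul_assoc _ _ _
      _ = q * (Δhat * m) := by rw [hmΔ]
      _ = (q * Δhat) * m := (mul_assoc _ _ _).symm
  have hrm : m * r = r * m := by
    refine lcancel hcan (a := m) ?_
    calc m * (m * r) = m * c := by rw [← hcr]
      _ = c * m := hmc
      _ = (m * r) * m := by rw [hcr]
      _ = m * (r * m) := mul_assoc _ _ _
  have hcrm : c = r * m := by rw [hcr, hrm]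
  -- Step 9 : r is quasi-central
  have hR1 : ∀ x : M, ∃ y, x * r = r * y := by
    intro x
    obtain ⟨v, hv⟩ := hC1 x
    obtain ⟨x₃, hx₃⟩ := hchi' v
    refine ⟨x₃, rcancel hcan (a := m) ?_⟩
    calc (x * r) * m = x * (r * m) := mul_assoc _ _ _
      _ = x * c := by rw [← hcrm]
      _ = c * v := hv
      _ = (r * m) * v := by rw [hcrm]
      _ = r * (m * v) := mul_assoc _ _ _
      _ = r * (x₃ * m) := by rw [hx₃]
      _ = (r * x₃) * m := (mul_assoc _ _ _).symm
  have hR2 : ∀ y : M, ∃ x, x * r = r * y := by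
    intro y
    obtain ⟨u, hu⟩ := hC2 y
    obtain ⟨yu, hyu⟩ := hchi u
    refine ⟨yu, lcancel hcan (a := m) ?_⟩
    calc m * (yu * r) = (m * yu) * r := (mul_assoc _ _ _).symm
      _ = (u * m) * r := by rw [← hyu]
      _ = u * (m * r) := mul_assoc _ _ _
      _ = u * c := by rw [← hcr]
      _ = c * y := hu
      _ = (m * r) * y := by rw [hcr]
      _ = m * (r * y) := mul_assoc _ _ _
  -- Step 10 : q = b * r
  have hqbr : q = b * r := by
    refine lcancel hcan (a := Δhat) ?_
    calc Δhat * q = q * Δhat := comm.symm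
      _ = c := rfl
      _ = m * r := hcr
      _ = (Δhat * b) * r := by rw [hb]
      _ = Δhat * (b * r) := mul_assoc _ _ _
  -- Step 11 : b is quasi-central
  have hB1 : ∀ x : M, ∃ y, x * b = b * y := by
    intro x
    obtain ⟨x₁, hx₁⟩ := hQ1 x
    obtain ⟨x₂, hx₂⟩ := hR2 x₁
    refine ⟨x₂, rcancel hcan (a := r) ?_⟩
    calc (x * b) * r = x * (b * r) := mul_assoc _ _ _
      _ = x * q := by rw [← hqbr]
      _ = q * x₁ := hx₁
      _ = (b * r) * x₁ := by rw [hqbr]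
      _ = b * (r * x₁) := mul_assoc _ _ _
      _ = b * (x₂ * r) := by rw [hx₂]
      _ = (b * x₂) * r := (mul_assoc _ _ _).symm
  have hB2 : ∀ y : M, ∃ x, x * b = b * y := by
    intro y
    obtain ⟨y₁, hy₁⟩ := hR1 y
    obtain ⟨x, hx⟩ := hQ2 y₁
    refine ⟨x, rcancel hcan (a := r) ?_⟩
    calc (x * b) * r = x * (b * r) := mul_assoc _ _ _
      _ = x * q := by rw [← hqbr]
      _ = q * y₁ := hx
      _ = (b * r) * y₁ := by rw [hqbr]
      _ = b * (r * y₁) := mul_assoc _ _ _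
      _ = b * (y * r) := by rw [← hy₁]
      _ = (b * y) * r := (mul_assoc _ _ _).symm
  -- Step 12/13 : b = 1 or r = 1
  have hbor : b = 1 ∨ r = 1 := by
    by_contra h
    push_neg at h
    exact hind ⟨b, r, qc_of_pair hcan hB1 hB2, qc_of_pair hcan hR1 hR2, h.1, h.2, hqbr⟩
  rcases hbor with hb1 | hr1
  · -- m = Δhat, and q divides Δhat on both sides
    have hmΔeq : m = Δhat := by rw [hb, hb1, mul_one]
    exact ⟨⟨a, by rw [← hmΔeq, ha]⟩, ⟨a, by rw [← hmΔeq, ← ham2]⟩⟩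
  · -- r = 1 is impossible
    exfalso
    have hcm : c = m := by rw [hcr, hr1, mul_one]
    have hex : ∃ n : ℕ, ∃ z, Δhat ^ n = q * z := pow_mult hcan hat hgen hhat q
    classical
    obtain ⟨z, hz⟩ := Nat.find_spec hex
    rcases Nat.eq_zero_or_pos (Nat.find hex) with h0 | hpos
    · rw [h0, pow_zero] at hz
      exact hqne (mul_eq_one'' hat hz.symm).1
    · obtain ⟨k, hk⟩ := Nat.exists_eq_succ_of_ne_zero (Nat.pos_iff_ne_zero.mp hpos)
      have hcomm' : Δhat ^ Nat.find hex = Δhat * Δhat ^ k := by rw [hk, pow_succ']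
      obtain ⟨w, hw⟩ := hmmin (Δhat ^ Nat.find hex) ⟨z, hz⟩ ⟨Δhat ^ k, hcomm'⟩
      have : Δhat * Δhat ^ k = Δhat * (q * w) := by
        calc Δhat * Δhat ^ k = Δhat ^ Nat.find hex := hcomm'.symm
          _ = m * w := hw
          _ = c * w := by rw [hcm]
          _ = (Δhat * q) * w := by rw [comm]
          _ = Δhat * (q * w) := mul_assoc _ _ _
      have hPk : ∃ z, Δhat ^ k = q * z := ⟨w, lcancel hcan this⟩
      exact Nat.find_min hex (by omega : k < Nat.find hex) hPk

end MainDev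


/-- In a Garside monoid with unique minimal fundamental element Δhat, every
indecomposable quasi-central element divides Δhat from the left and from the right; in
particular the monoid is tame. -/
theorem stmt_11 {M : Type*} [Monoid M] (hcan : IsCancellative M) (hat : IsAtomicMonoid M)
    (hgen : GeneratedByAtoms M)
    (hlcm : ∀ u v : M, (∃ m, IsRightLcm u v m) ∧ (∃ m, IsLeftLcm u v m))
    (Δhat : M) (hhat : IsFundamental Δhat)
    (hdiv : ∀ Δ : M, IsFundamental Δ → (∃ w, Δ = Δhat * w) ∧ (∃ w, Δ = w * Δhat)) :
    (∀ Δ₀ : M, IsIndecomposableQC Δ₀ →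
      (∃ w, Δhat = Δ₀ * w) ∧ (∃ w, Δhat = w * Δ₀)) ∧ IsTame M := by
  have main : ∀ Δ₀ : M, IsIndecomposableQC Δ₀ →
      (∃ w, Δhat = Δ₀ * w) ∧ (∃ w, Δhat = w * Δ₀) :=
    fun Δ₀ h₀ => main_div hcan hat hgen hlcm Δhat hhat hdiv h₀
  have hmin : ∀ Δ' : M, IsFundamental Δ' →
      ((∃ w, Δhat = Δ' * w) ∨ (∃ w, Δhat = w * Δ')) → Δ' = Δhat := by
    intro Δ' hΔ' hdvd
    obtain ⟨⟨w', hw'⟩, ⟨w'', hw''⟩⟩ := hdiv Δ' hΔ'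
    rcases hdvd with ⟨w, hw⟩ | ⟨w, hw⟩
    · have hkey : Δhat * 1 = Δhat * (w' * w) := by
        rw [mul_one]
        calc Δhat = Δ' * w := hw
          _ = (Δhat * w') * w := by rw [← hw']
          _ = Δhat * (w' * w) := mul_assoc _ _ _
      have h1 : w' * w = 1 := (lcancel hcan hkey).symm
      have hw1 : w' = 1 := (mul_eq_one'' hat h1).1
      rw [hw', hw1, mul_one]
    · have hkey : (1 : M) * Δhat = (w * w'') * Δhat := by
        rw [one_mul]
        calc Δhat = w * Δ' := hw
          _ = w * (w'' * Δhat) := by rw [← hw'']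
          _ = (w * w'') * Δhat := (mul_assoc _ _ _).symm
      have h1 : w * w'' = 1 := (rcancel hcan hkey).symm
      have hw2 : w'' = 1 := (mul_eq_one'' hat h1).2
      rw [hw'', hw2, one_mul]
  exact ⟨main, fun Δ₀ h₀ => ⟨Δhat, ⟨hhat, hmin⟩, main Δ₀ h₀⟩⟩
end

section
/- Let G = ⟨L | R⟩ be a positive homogeneously presented group and G⁺ the associated monoid. If G⁺ is cancellative and carries a fundamental element, then the localization homomorphism π: G⁺ → G is injective. -/
/-!
Each generator `t` of `G⁺` right-divides `Δ` and satisfies `Δ * t = s * Δ` for some `s`, so the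
powers of `Δ` are quasi-central and every element of `G⁺` right-divides a power of `Δ`. Hence
any two elements have a common left multiple: `G⁺` satisfies Ore's condition and, being
cancellative, embeds into its group of left fractions. The defining relations hold in that group,
so the embedding factors through `π : G⁺ → G`, which is therefore injective.
-/

/-- The canonical monoid homomorphism from the free monoid to the free group. -/
def toFreeGroupHom {L : Type*} : FreeMonoid L →* FreeGroup L :=
  FreeMonoid.lift FreeGroup.of

/-- The relators in the free group associated to a positive presentation. -/
def relatorsOfRel {L : Type*} (R : FreeMonoid L → FreeMonoid L → Prop) :
    Set (FreeGroup L) :=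
  {g | ∃ a b : FreeMonoid L, R a b ∧ g = toFreeGroupHom a * (toFreeGroupHom b)⁻¹}

namespace OreLocalization

theorem numeratorHom_injective {R : Type*} [Monoid R] [IsLeftCancelMul R] {S : Submonoid R}
    [OreSet S] : Function.Injective (numeratorHom : R →* R[S⁻¹]) := by
  intro x y h
  rw [numeratorHom_apply, numeratorHom_apply, oreDiv_eq_iff] at h
  obtain ⟨u, v, hxy, huv⟩ := h
  simp only [OneMemClass.coe_one, mul_one] at huv
  rw [Submonoid.smul_def, smul_eq_mul, smul_eq_mul, ← huv] at hxy
  exact (mul_left_cancel hxy).symm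

noncomputable abbrev oreSetTopOfExistsMulEqMul {R : Type*} [Monoid R] [IsRightCancelMul R]
    (h : ∀ r s : R, ∃ r' s', s' * r = r' * s) : OreSet (⊤ : Submonoid R) where
  ore_right_cancel _ _ _ hr := ⟨1, by simpa using mul_right_cancel hr⟩
  oreNum r s := (h r s).choose
  oreDenom r s := ⟨(h r s).choose_spec.choose, trivial⟩
  ore_eq r s := (h r s).choose_spec.choose_spec

end OreLocalization

section Fundamental

variable {M : Type*} [Monoid M] {S : Set M} {Δ : M}

theorem exists_mul_eq_mul_of_mem_closure (hΔ : ∀ t ∈ S, ∃ s d, Δ = s * d ∧ Δ = d * t)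
    {x : M} (hx : x ∈ Submonoid.closure S) : ∃ y, Δ * x = y * Δ := by
  induction hx using Submonoid.closure_induction with
  | mem t ht =>
    obtain ⟨s, d, hsd, hdt⟩ := hΔ t ht
    refine ⟨s, ?_⟩
    conv_lhs => rw [hsd]
    rw [mul_assoc, ← hdt]
  | one => exact ⟨1, by simp⟩
  | mul x y _ _ hx hy =>
    obtain ⟨x', hx'⟩ := hx
    obtain ⟨y', hy'⟩ := hy
    exact ⟨x' * y', by rw [← mul_assoc, hx', mul_assoc, hy', mul_assoc]⟩

theorem exists_pow_mul_eq_mul_pow (h : ∀ x : M, ∃ y, Δ * x = y * Δ) (n : ℕ) (x : M) :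
    ∃ y, Δ ^ n * x = y * Δ ^ n := by
  induction n generalizing x with
  | zero => exact ⟨x, by simp⟩
  | succ n ih =>
    obtain ⟨y, hy⟩ := h x
    obtain ⟨z, hz⟩ := ih y
    exact ⟨z, by rw [pow_succ, mul_assoc, hy, ← mul_assoc, hz, mul_assoc]⟩

theorem exists_pow_eq_mul_of_closure_eq_top (hS : Submonoid.closure S = ⊤)
    (hΔ : ∀ t ∈ S, ∃ s d, Δ = s * d ∧ Δ = d * t) (x : M) : ∃ n e, Δ ^ n = e * x := by
  have hcentral (x : M) : ∃ y, Δ * x = y * Δ :=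
    exists_mul_eq_mul_of_mem_closure hΔ (hS ▸ Submonoid.mem_top x)
  induction hS ▸ Submonoid.mem_top x using Submonoid.closure_induction with
  | mem t ht =>
    obtain ⟨_, d, -, hdt⟩ := hΔ t ht
    exact ⟨1, d, by rw [pow_one, hdt]⟩
  | one => exact ⟨0, 1, by simp⟩
  | mul x y _ _ hx hy =>
    obtain ⟨m, f, hf⟩ := hx
    obtain ⟨n, e, he⟩ := hy
    obtain ⟨e', he'⟩ := exists_pow_mul_eq_mul_pow hcentral m e
    exact ⟨m + n, e' * f, by
      rw [pow_add, he, ← mul_assoc, he', hf]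
      simp only [mul_assoc]⟩

theorem exists_mul_eq_mul_of_closure_eq_top (hS : Submonoid.closure S = ⊤)
    (hΔ : ∀ t ∈ S, ∃ s d, Δ = s * d ∧ Δ = d * t) (r s : M) : ∃ r' s', s' * r = r' * s := by
  obtain ⟨m, f, hf⟩ := exists_pow_eq_mul_of_closure_eq_top hS hΔ r
  obtain ⟨n, e, he⟩ := exists_pow_eq_mul_of_closure_eq_top hS hΔ s
  exact ⟨Δ ^ m * e, Δ ^ n * f, by rw [mul_assoc, ← hf, mul_assoc, ← he, ← pow_add, ← pow_add,
    add_comm]⟩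

end Fundamental

theorem eq_of_mk_toFreeGroupHom_eq {L H : Type*} [Group H]
    {R : FreeMonoid L → FreeMonoid L → Prop}
    (g : FreeMonoid L →* H) (hg : ∀ a b, R a b → g a = g b) {a b : FreeMonoid L}
    (hab : QuotientGroup.mk' (Subgroup.normalClosure (relatorsOfRel R)) (toFreeGroupHom a)
        = QuotientGroup.mk' (Subgroup.normalClosure (relatorsOfRel R)) (toFreeGroupHom b)) :
    g a = g b := by
  have hlift (w : FreeMonoid L) : FreeGroup.lift (g ∘ FreeMonoid.of) (toFreeGroupHom w) = g w :=
    DFunLike.congr_fun (FreeMonoid.hom_eq (f := (FreeGroup.lift _).comp toFreeGroupHom)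
      fun l => by simp [toFreeGroupHom]) w
  have hrel : ∀ r ∈ relatorsOfRel R, FreeGroup.lift (g ∘ FreeMonoid.of) r = 1 := by
    rintro _ ⟨a', b', hR, rfl⟩
    rw [map_mul, map_inv, hlift, hlift, hg a' b' hR, mul_inv_cancel]
  rw [QuotientGroup.mk'_apply, QuotientGroup.mk'_apply, QuotientGroup.eq] at hab
  have := PresentedGroup.to_group_eq_one_of_mem_closure hrel _ hab
  rwa [map_mul, map_inv, hlift, hlift, inv_mul_eq_one] at this

theorem stmt_12_general {L : Type*} (R : FreeMonoid L → FreeMonoid L → Prop)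
    (hcan : ∀ a b x y : (conGen R).Quotient, a * x * b = a * y * b → x = y)
    (Δ : (conGen R).Quotient) (σ : Equiv.Perm L)
    (hΔ : ∀ l : L, ∃ d : (conGen R).Quotient,
      Δ = (conGen R).mk' (FreeMonoid.of l) * d ∧
      Δ = d * (conGen R).mk' (FreeMonoid.of (σ l)))
    (a b : FreeMonoid L)
    (hab : QuotientGroup.mk' (Subgroup.normalClosure (relatorsOfRel R)) (toFreeGroupHom a)
        = QuotientGroup.mk' (Subgroup.normalClosure (relatorsOfRel R)) (toFreeGroupHom b)) :
    (conGen R) a b := by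
  have : IsCancelMul (conGen R).Quotient :=
    { mul_left_cancel := fun c x y h => hcan c 1 x y (by simpa using h)
      mul_right_cancel := fun c x y h => hcan 1 c x y (by simpa using h) }
  let gens := Set.range fun l => (conGen R).mk' (FreeMonoid.of l)
  have hgen : Submonoid.closure gens = ⊤ := PresentedMonoid.closure_range_of R
  have hfund : ∀ t ∈ gens, ∃ s d, Δ = s * d ∧ Δ = d * t := by
    rintro _ ⟨l, rfl⟩
    obtain ⟨d, hld, hdl⟩ := hΔ (σ.symm l)
    exact ⟨_, d, hld, by simpa using hdl⟩
  let _ := OreLocalization.oreSetTopOfExistsMulEqMul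
    (exists_mul_eq_mul_of_closure_eq_top hgen hfund)
  let ν := (OreLocalization.numeratorHom (S := ⊤)).comp (conGen R).mk'
  let g := IsUnit.liftRight ν fun w =>
    OreLocalization.numerator_isUnit ⟨(conGen R).mk' w, Submonoid.mem_top _⟩
  have hg : ∀ u v, R u v → g u = g v := fun u v h =>
    Units.ext <| congrArg OreLocalization.numeratorHom <| (Con.eq _).2 (ConGen.Rel.of u v h)
  have hν : ν a = ν b := by
    simpa only [g, IsUnit.coe_liftRight] using
      congrArg Units.val (eq_of_mk_toFreeGroupHom_eq g hg hab)
  exact (Con.eq _).1 (OreLocalization.numeratorHom_injective hν)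

/-- Let G = ⟨L ∣ R⟩ be a positive homogeneously presented group and G⁺ the associated
monoid.  If G⁺ is cancellative and carries a fundamental element, then the localization
homomorphism π : G⁺ → G is injective: two positive words mapping to the same element of
the presented group are already equivalent in the monoid. -/
theorem stmt_12 {L : Type*} (R : FreeMonoid L → FreeMonoid L → Prop)
    (hhom : ∀ a b : FreeMonoid L, R a b → a.length = b.length)
    (hcan : ∀ a b x y : (conGen R).Quotient, a * x * b = a * y * b → x = y)
    (Δ : (conGen R).Quotient) (σ : Equiv.Perm L)
    (hΔ : ∀ l : L, ∃ d : (conGen R).Quotient,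
      Δ = (conGen R).mk' (FreeMonoid.of l) * d ∧
      Δ = d * (conGen R).mk' (FreeMonoid.of (σ l)))
    (a b : FreeMonoid L)
    (hab : QuotientGroup.mk' (Subgroup.normalClosure (relatorsOfRel R)) (toFreeGroupHom a)
        = QuotientGroup.mk' (Subgroup.normalClosure (relatorsOfRel R)) (toFreeGroupHom b)) :
    (conGen R) a b :=
  stmt_12_general R hcan Δ σ hΔ a b hab
end
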